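/- arXiv:2410.01732 — 9 statements merged into one kernel-verified Lean document; each statement's English description precedes it below -/
import Mathlib

section
/- For any real-valued random variable X with mean μ and variance σ² > 0, and any threshold t ∈ ℝ, the expected regret satisfies E[(X−t)₊] ≤ (1/2)(μ − t + √(σ² + (μ−t)²)), and this bound is sharp: the supremum of E[(X−t)₊] over all distributions with mean μ and variance σ² equals (1/2)(μ − t + √(σ² + (μ−t)²)). -/
open MeasureTheory

lemma dirac_int (f : ℝ → ℝ) (hf : Measurable f) (a : ℝ) : Integrable f (Measure.dirac a) := by
  refine ⟨hf.aestronglyMeasurable, ?_⟩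
  rw [HasFiniteIntegral, lintegral_dirac]
  exact ENNReal.coe_lt_top

lemma part1 (μ σ t : ℝ) (hσ : 0 < σ) (P : Measure ℝ) (hP : IsProbabilityMeasure P)
    (hI2 : Integrable (fun x => x ^ 2) P) (h1 : (∫ x, x ∂P) = μ)
    (h2 : (∫ x, x ^ 2 ∂P) = μ ^ 2 + σ ^ 2) :
    (∫ x, max (x - t) 0 ∂P) ≤ (μ - t + Real.sqrt (σ ^ 2 + (μ - t) ^ 2)) / 2 := by
  set s := Real.sqrt (σ ^ 2 + (μ - t) ^ 2) with hsdef
  have hnn : (0:ℝ) ≤ σ ^ 2 + (μ - t) ^ 2 := by positivity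
  have hs2 : s ^ 2 = σ ^ 2 + (μ - t) ^ 2 := Real.sq_sqrt hnn
  have hs : 0 < s := Real.sqrt_pos.2 (by nlinarith)
  have hI1 : Integrable (fun x => x) P := by
    refine Integrable.mono' (hI2.add (integrable_const 1)) measurable_id.aestronglyMeasurable ?_
    filter_upwards with x
    simp only [Real.norm_eq_abs, Pi.add_apply]
    nlinarith [sq_nonneg (|x| - 1), sq_abs x, abs_nonneg x]
  have e1 : Integrable (fun x => (1/(4*s)) * x ^ 2 + (1/2 - t/(2*s)) * x) P :=
    (hI2.const_mul _).add (hI1.const_mul _)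
  have hg : Integrable (fun x => (1/(4*s)) * x ^ 2 + (1/2 - t/(2*s)) * x + (-t/2 + s/4 + t^2/(4*s))) P :=
    e1.add (integrable_const _)
  have hpoly : ∀ x : ℝ, (1/(4*s)) * x ^ 2 + (1/2 - t/(2*s)) * x + (-t/2 + s/4 + t^2/(4*s))
      = (x - t + s)^2 / (4*s) := by
    intro x; field_simp; ring
  have hle : ∀ x : ℝ, max (x - t) 0 ≤ (1/(4*s)) * x ^ 2 + (1/2 - t/(2*s)) * x + (-t/2 + s/4 + t^2/(4*s)) := by
    intro x
    rw [hpoly x]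
    refine max_le ?_ (by positivity)
    rw [← sub_nonneg]
    have : (x - t + s)^2 / (4*s) - (x - t) = (x - t - s)^2 / (4*s) := by field_simp; ring
    rw [this]; positivity
  have key : (∫ x, max (x - t) 0 ∂P) ≤ ∫ x, ((1/(4*s)) * x ^ 2 + (1/2 - t/(2*s)) * x + (-t/2 + s/4 + t^2/(4*s))) ∂P := by
    refine integral_mono_of_nonneg ?_ hg ?_
    · filter_upwards with x; exact le_max_right _ _
    · filter_upwards with x; exact hle x
  have hint : ∫ x, ((1/(4*s)) * x ^ 2 + (1/2 - t/(2*s)) * x + (-t/2 + s/4 + t^2/(4*s))) ∂P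
      = (1/(4*s)) * (μ^2 + σ^2) + (1/2 - t/(2*s)) * μ + (-t/2 + s/4 + t^2/(4*s)) := by
    rw [integral_add e1 (integrable_const _), integral_add (hI2.const_mul _) (hI1.const_mul _),
        MeasureTheory.integral_const_mul, MeasureTheory.integral_const_mul, h1, h2, integral_const]
    simp
  rw [hint] at key
  have heq : (1/(4*s)) * (μ^2 + σ^2) + (1/2 - t/(2*s)) * μ + (-t/2 + s/4 + t^2/(4*s)) = (μ - t + s)/2 := by
    field_simp
    nlinarith [hs2]
  linarith [key, heq]

lemma part2 (μ σ t : ℝ) (hσ : 0 < σ) :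
    ∃ P : Measure ℝ, IsProbabilityMeasure P ∧ Integrable (fun x => x ^ 2) P ∧
      (∫ x, x ∂P) = μ ∧ (∫ x, x ^ 2 ∂P) = μ ^ 2 + σ ^ 2 ∧
      (μ - t + Real.sqrt (σ ^ 2 + (μ - t) ^ 2)) / 2 = ∫ x, max (x - t) 0 ∂P := by
  set s := Real.sqrt (σ ^ 2 + (μ - t) ^ 2) with hsdef
  have hnn : (0:ℝ) ≤ σ ^ 2 + (μ - t) ^ 2 := by positivity
  have hs2 : s ^ 2 = σ ^ 2 + (μ - t) ^ 2 := Real.sq_sqrt hnn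
  have hs : 0 < s := Real.sqrt_pos.2 (by nlinarith)
  have habs : |μ - t| ≤ s := by
    rw [hsdef]
    calc |μ - t| = Real.sqrt ((μ - t)^2) := (Real.sqrt_sq_eq_abs _).symm
    _ ≤ _ := Real.sqrt_le_sqrt (by nlinarith)
  have habs' := abs_le.1 habs
  set p := (μ - t + s) / (2 * s) with hpdef
  have hp0 : 0 ≤ p := by
    apply div_nonneg <;> linarith
  have hp1 : p ≤ 1 := by
    rw [div_le_one (by linarith)]; linarith
  set P : Measure ℝ := ENNReal.ofReal p • Measure.dirac (t + s)
      + ENNReal.ofReal (1 - p) • Measure.dirac (t - s) with hPdef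
  have hprob : IsProbabilityMeasure P := by
    constructor
    rw [hPdef]
    simp only [Measure.coe_add, Measure.coe_smul, Pi.add_apply, Pi.smul_apply,
      Measure.dirac_apply_of_mem (Set.mem_univ _), smul_eq_mul, mul_one,
      ← ENNReal.ofReal_add hp0 (by linarith : (0:ℝ) ≤ 1 - p)]
    norm_num
  -- generic integral formula
  have hint : ∀ f : ℝ → ℝ, Measurable f →
      Integrable f P ∧ (∫ x, f x ∂P) = p * f (t + s) + (1 - p) * f (t - s) := by
    intro f hf
    have i1 : Integrable f (ENNReal.ofReal p • Measure.dirac (t + s)) :=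
      (dirac_int f hf _).smul_measure ENNReal.ofReal_ne_top
    have i2 : Integrable f (ENNReal.ofReal (1 - p) • Measure.dirac (t - s)) :=
      (dirac_int f hf _).smul_measure ENNReal.ofReal_ne_top
    refine ⟨i1.add_measure i2, ?_⟩
    rw [hPdef, integral_add_measure i1 i2, integral_smul_measure, integral_smul_measure,
        integral_dirac, integral_dirac, ENNReal.toReal_ofReal hp0,
        ENNReal.toReal_ofReal (by linarith)]
    simp [smul_eq_mul]
  obtain ⟨hi2, hv2⟩ := hint (fun x => x ^ 2) (by measurability)
  obtain ⟨hi1, hv1⟩ := hint (fun x => x) measurable_id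
  obtain ⟨him, hvm⟩ := hint (fun x => max (x - t) 0) (by measurability)
  refine ⟨P, hprob, hi2, ?_, ?_, ?_⟩
  · rw [hv1, hpdef]; field_simp; ring
  · rw [hv2]
    have : p * (t + s) ^ 2 + (1 - p) * (t - s) ^ 2 = μ ^ 2 + σ ^ 2 := by
      rw [hpdef]; field_simp; ring_nf
      linear_combination (2*s) * hs2
    exact this
  · rw [hvm]
    simp only [add_sub_cancel_left, sub_sub_cancel_left]
    rw [max_eq_left hs.le, max_eq_right (by linarith : -s ≤ 0), hpdef]
    field_simp
    ring

theorem stmt_0 (μ σ t : ℝ) (hσ : 0 < σ) :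
    (∀ P : Measure ℝ, IsProbabilityMeasure P → Integrable (fun x => x ^ 2) P →
        (∫ x, x ∂P) = μ → (∫ x, x ^ 2 ∂P) = μ ^ 2 + σ ^ 2 →
        (∫ x, max (x - t) 0 ∂P) ≤ (μ - t + Real.sqrt (σ ^ 2 + (μ - t) ^ 2)) / 2) ∧
    sSup {y : ℝ | ∃ P : Measure ℝ, IsProbabilityMeasure P ∧ Integrable (fun x => x ^ 2) P ∧
        (∫ x, x ∂P) = μ ∧ (∫ x, x ^ 2 ∂P) = μ ^ 2 + σ ^ 2 ∧
        y = ∫ x, max (x - t) 0 ∂P}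
      = (μ - t + Real.sqrt (σ ^ 2 + (μ - t) ^ 2)) / 2 := by
  constructor
  · intro P hP hi h1 h2
    exact part1 μ σ t hσ P hP hi h1 h2
  · obtain ⟨P, hprob, hi2, h1, h2, heq⟩ := part2 μ σ t hσ
    have hmem : (μ - t + Real.sqrt (σ ^ 2 + (μ - t) ^ 2)) / 2 ∈
        {y : ℝ | ∃ P : Measure ℝ, IsProbabilityMeasure P ∧ Integrable (fun x => x ^ 2) P ∧
          (∫ x, x ∂P) = μ ∧ (∫ x, x ^ 2 ∂P) = μ ^ 2 + σ ^ 2 ∧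
          y = ∫ x, max (x - t) 0 ∂P} := ⟨P, hprob, hi2, h1, h2, heq⟩
    have hub : ∀ y ∈ {y : ℝ | ∃ P : Measure ℝ, IsProbabilityMeasure P ∧ Integrable (fun x => x ^ 2) P ∧
          (∫ x, x ∂P) = μ ∧ (∫ x, x ^ 2 ∂P) = μ ^ 2 + σ ^ 2 ∧
          y = ∫ x, max (x - t) 0 ∂P},
        y ≤ (μ - t + Real.sqrt (σ ^ 2 + (μ - t) ^ 2)) / 2 := by
      rintro y ⟨Q, hQ, hQi, hQ1, hQ2, rfl⟩
      exact part1 μ σ t hσ Q hQ hQi hQ1 hQ2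
    exact le_antisymm (csSup_le ⟨_, hmem⟩ hub) (le_csSup ⟨_, hub⟩ hmem)
end

section
/- For any real-valued random variable X with mean μ and variance σ² > 0, and any t ∈ ℝ, the supremum of E[(X−t)₋²] over all distributions with mean μ and variance σ² equals σ² + ((t−μ)₊)². -/
/-!
Fix `s = max t μ`. Since `(t - x)₊ ≤ |s - x|`, every admissible law has
`E[(t - X)₊²] ≤ E[(s - X)²] = σ² + (s - μ)² = σ² + (t - μ)₊²`.
Conversely, the two-point law with atoms `μ - d`, `μ + e` and weights `e / (d + e)`, `d / (d + e)`
has mean `μ` and variance `d e`. For `t > μ`, taking `e = t - μ`, `d = σ² / e` attains the bound;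
for `t ≤ μ`, taking `d → ∞`, `e = σ² / d` gives values `σ² (t - μ + d)² / (d² + σ²) → σ²`.
-/

open MeasureTheory Filter Topology

def downsideSecondMoments (μ σ t : ℝ) : Set ℝ :=
  {y : ℝ | ∃ P : Measure ℝ, IsProbabilityMeasure P ∧ Integrable (fun x => x ^ 2) P ∧
    (∫ x, x ∂P) = μ ∧ (∫ x, x ^ 2 ∂P) = μ ^ 2 + σ ^ 2 ∧ y = ∫ x, (max (t - x) 0) ^ 2 ∂P}

section Upper

lemma sq_max_sub_zero_le_sq_sub {t s : ℝ} (hts : t ≤ s) (x : ℝ) :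
    max (t - x) 0 ^ 2 ≤ (s - x) ^ 2 := by
  rcases le_total (t - x) 0 with h | h
  · rw [max_eq_right h, zero_pow two_ne_zero]; positivity
  · rw [max_eq_left h]; nlinarith

variable {P : Measure ℝ} [IsProbabilityMeasure P]

lemma integrable_sq_sub (hP : Integrable (fun x => x ^ 2) P) (s : ℝ) :
    Integrable (fun x => (s - x) ^ 2) P :=
  ((memLp_const s).sub ((memLp_two_iff_integrable_sq aestronglyMeasurable_id).2 hP)).integrable_sq

lemma integral_sq_sub (hP : Integrable (fun x => x ^ 2) P) (s : ℝ) :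
    ∫ x, (s - x) ^ 2 ∂P = s ^ 2 - 2 * s * (∫ x, x ∂P) + ∫ x, x ^ 2 ∂P := by
  have hid : Integrable (fun x : ℝ => x) P :=
    ((memLp_two_iff_integrable_sq aestronglyMeasurable_id).2 hP).integrable one_le_two
  have hlin : Integrable (fun x : ℝ => s ^ 2 - 2 * s * x) P :=
    (integrable_const _).sub (hid.const_mul _)
  calc ∫ x, (s - x) ^ 2 ∂P = ∫ x, ((s ^ 2 - 2 * s * x) + x ^ 2) ∂P := by congr with x; ring
    _ = _ := by
      rw [integral_add hlin hP, integral_sub (integrable_const _) (hid.const_mul _),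
        integral_const_mul, integral_const, probReal_univ, one_smul]

lemma le_of_mem_downsideSecondMoments {μ σ t y : ℝ} (hy : y ∈ downsideSecondMoments μ σ t) :
    y ≤ σ ^ 2 + max (t - μ) 0 ^ 2 := by
  obtain ⟨P, _, hP, hmean, hsec, rfl⟩ := hy
  have hbound := sq_max_sub_zero_le_sq_sub (le_max_left t μ)
  have hsq := integrable_sq_sub hP (max t μ)
  have hint : Integrable (fun x => max (t - x) 0 ^ 2) P :=
    hsq.mono' (by fun_prop) (ae_of_all _ fun x => by
      rw [Real.norm_of_nonneg (by positivity)]; exact hbound x)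
  calc ∫ x, max (t - x) 0 ^ 2 ∂P ≤ ∫ x, (max t μ - x) ^ 2 ∂P := integral_mono hint hsq hbound
    _ = σ ^ 2 + (max t μ - μ) ^ 2 := by rw [integral_sq_sub hP, hmean, hsec]; ring
    _ = σ ^ 2 + max (t - μ) 0 ^ 2 := by rw [← max_sub_sub_right, sub_self]

end Upper

section TwoPoint

noncomputable def twoPoint (q a b : ℝ) : Measure ℝ :=
  ENNReal.ofReal q • Measure.dirac a + ENNReal.ofReal (1 - q) • Measure.dirac b

variable {q : ℝ} (a b : ℝ)

lemma isProbabilityMeasure_twoPoint (hq₀ : 0 ≤ q) (hq₁ : q ≤ 1) :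
    IsProbabilityMeasure (twoPoint q a b) := by
  constructor
  simp only [twoPoint, Measure.add_apply, Measure.smul_apply, measure_univ, smul_eq_mul, mul_one]
  rw [← ENNReal.ofReal_add hq₀ (sub_nonneg.2 hq₁), add_sub_cancel, ENNReal.ofReal_one]

lemma integrable_twoPoint (f : ℝ → ℝ) : Integrable f (twoPoint q a b) :=
  ((integrable_dirac enorm_lt_top).smul_measure ENNReal.ofReal_ne_top).add_measure
    ((integrable_dirac enorm_lt_top).smul_measure ENNReal.ofReal_ne_top)

lemma integral_twoPoint (hq₀ : 0 ≤ q) (hq₁ : q ≤ 1) (f : ℝ → ℝ) :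
    ∫ x, f x ∂twoPoint q a b = q * f a + (1 - q) * f b := by
  rw [twoPoint, integral_add_measure, integral_smul_measure, integral_smul_measure, integral_dirac,
    integral_dirac, ENNReal.toReal_ofReal hq₀, ENNReal.toReal_ofReal (sub_nonneg.2 hq₁),
    smul_eq_mul, smul_eq_mul]
  exacts [(integrable_dirac enorm_lt_top).smul_measure ENNReal.ofReal_ne_top,
    (integrable_dirac enorm_lt_top).smul_measure ENNReal.ofReal_ne_top]

end TwoPoint

lemma mem_downsideSecondMoments_twoPoint {d e σ : ℝ} (μ t : ℝ) (hd : 0 ≤ d) (he : 0 ≤ e)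
    (hde : 0 < d + e) (hσ : d * e = σ ^ 2) :
    e / (d + e) * max (t - (μ - d)) 0 ^ 2 + (1 - e / (d + e)) * max (t - (μ + e)) 0 ^ 2
      ∈ downsideSecondMoments μ σ t := by
  have hq₀ : 0 ≤ e / (d + e) := by positivity
  have hq₁ : e / (d + e) ≤ 1 := (div_le_one hde).2 (by linarith)
  refine ⟨_, isProbabilityMeasure_twoPoint (μ - d) (μ + e) hq₀ hq₁, integrable_twoPoint _ _ _,
    ?_, ?_, (integral_twoPoint _ _ hq₀ hq₁ fun x => max (t - x) 0 ^ 2).symm⟩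
  · rw [integral_twoPoint _ _ hq₀ hq₁]; field_simp; ring
  · rw [integral_twoPoint _ _ hq₀ hq₁, ← hσ]; field_simp; ring

lemma isGreatest_downsideSecondMoments {μ t : ℝ} (σ : ℝ) (hμt : μ < t) :
    IsGreatest (downsideSecondMoments μ σ t) (σ ^ 2 + (t - μ) ^ 2) := by
  have he : 0 < t - μ := sub_pos.2 hμt
  refine ⟨?_, fun y hy => (max_eq_left he.le ▸ le_of_mem_downsideSecondMoments hy)⟩
  have hd : 0 ≤ σ ^ 2 / (t - μ) := by positivity
  convert mem_downsideSecondMoments_twoPoint μ t hd he.le (by positivity)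
    (div_mul_cancel₀ _ he.ne') using 1
  rw [max_eq_left (by linarith), add_sub_cancel, sub_self, max_self]
  field_simp
  ring

lemma tendsto_mul_sq_add_div_sq_add (c s : ℝ) :
    Tendsto (fun d => s * (c + d) ^ 2 / (d ^ 2 + s)) atTop (𝓝 s) := by
  have hcont : ContinuousAt (fun u => s * (c * u + 1) ^ 2 / (1 + s * u ^ 2)) 0 := by
    fun_prop (disch := simp)
  have hlim := hcont.tendsto.comp tendsto_inv_atTop_zero
  norm_num at hlim
  refine hlim.congr' ((eventually_gt_atTop 0).mono fun d hd => ?_)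
  simp only [Function.comp_apply]
  field_simp

lemma isLUB_downsideSecondMoments {μ t : ℝ} (σ : ℝ) (htμ : t ≤ μ) :
    IsLUB (downsideSecondMoments μ σ t) (σ ^ 2) := by
  refine ⟨fun y hy => by simpa [htμ] using le_of_mem_downsideSecondMoments hy, fun b hb => ?_⟩
  refine le_of_tendsto (tendsto_mul_sq_add_div_sq_add (t - μ) (σ ^ 2))
    ((eventually_ge_atTop (max (μ - t) 1)).mono fun d hdμ => hb ?_)
  have hd : 0 < d := one_pos.trans_le (le_of_max_le_right hdμ)
  have he : 0 ≤ σ ^ 2 / d := by positivity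
  convert mem_downsideSecondMoments_twoPoint μ t hd.le he (by positivity)
    (mul_div_cancel₀ _ hd.ne') using 1
  rw [max_eq_left (by linarith [le_of_max_le_left hdμ]), max_eq_right (by linarith)]
  field_simp
  ring

theorem stmt_1_general (μ σ t : ℝ) :
    sSup {y : ℝ | ∃ P : Measure ℝ, IsProbabilityMeasure P ∧ Integrable (fun x => x ^ 2) P ∧
        (∫ x, x ∂P) = μ ∧ (∫ x, x ^ 2 ∂P) = μ ^ 2 + σ ^ 2 ∧
        y = ∫ x, (max (t - x) 0) ^ 2 ∂P}
      = σ ^ 2 + (max (t - μ) 0) ^ 2 := by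
  change sSup (downsideSecondMoments μ σ t) = _
  rcases le_or_gt t μ with htμ | hμt
  · have hne : (downsideSecondMoments μ σ t).Nonempty :=
      ⟨_, mem_downsideSecondMoments_twoPoint μ t zero_le_one (sq_nonneg σ) (by positivity)
        (one_mul _)⟩
    rw [(isLUB_downsideSecondMoments σ htμ).csSup_eq hne, max_eq_right (sub_nonpos.2 htμ)]
    ring
  · rw [(isGreatest_downsideSecondMoments σ hμt).csSup_eq, max_eq_left (sub_pos.2 hμt).le]

theorem stmt_1 (μ σ t : ℝ) (hσ : 0 < σ) :
    sSup {y : ℝ | ∃ P : Measure ℝ, IsProbabilityMeasure P ∧ Integrable (fun x => x ^ 2) P ∧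
        (∫ x, x ∂P) = μ ∧ (∫ x, x ^ 2 ∂P) = μ ^ 2 + σ ^ 2 ∧
        y = ∫ x, (max (t - x) 0) ^ 2 ∂P}
      = σ ^ 2 + (max (t - μ) 0) ^ 2 :=
  stmt_1_general μ σ t
end

section
/- For any real-valued random variable X with mean μ and variance σ² > 0, and any t ∈ ℝ, the supremum of the target semi-variance E[(X−t)₊²] over all distributions with mean μ and variance σ² equals σ² + ((μ−t)₊)². -/
/-!
Write `s = min t μ`. Since `s ≤ t`, `(x - t)₊² ≤ (x - s)²` pointwise, and for every law in
`𝓛(μ, σ)` we have `E[(X - s)²] = σ² + (μ - s)² = σ² + (μ - t)₊²`: this is the upper bound.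
It is attained when `t < μ`, by the two-point law with atoms `t` and `μ + σ² / (μ - t)`.
When `μ ≤ t` it is approached by two-point laws with one atom far to the right, at `t + u`,
and the other below `μ`: their target semivariance `σ² u² / (σ² + (u + t - μ)²)` tends to
`σ²` as `u → ∞`.
-/

open MeasureTheory Filter Topology

noncomputable def twoPointMeasure (q a b : ℝ) : Measure ℝ :=
  ENNReal.ofReal (1 - q) • Measure.dirac a + ENNReal.ofReal q • Measure.dirac b

section TwoPoint

variable {q : ℝ} (a b : ℝ)

theorem integrable_twoPointMeasure (f : ℝ → ℝ) : Integrable f (twoPointMeasure q a b) :=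
  ((integrable_dirac enorm_lt_top).smul_measure ENNReal.ofReal_ne_top).add_measure
    ((integrable_dirac enorm_lt_top).smul_measure ENNReal.ofReal_ne_top)

theorem integral_twoPointMeasure (hq0 : 0 ≤ q) (hq1 : q ≤ 1) (f : ℝ → ℝ) :
    ∫ x, f x ∂twoPointMeasure q a b = (1 - q) * f a + q * f b := by
  rw [twoPointMeasure, integral_add_measure, integral_smul_measure, integral_smul_measure,
    integral_dirac, integral_dirac, ENNReal.toReal_ofReal (sub_nonneg.2 hq1),
    ENNReal.toReal_ofReal hq0, smul_eq_mul, smul_eq_mul]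
  all_goals exact (integrable_dirac enorm_lt_top).smul_measure ENNReal.ofReal_ne_top

theorem isProbabilityMeasure_twoPointMeasure (hq0 : 0 ≤ q) (hq1 : q ≤ 1) :
    IsProbabilityMeasure (twoPointMeasure q a b) := by
  constructor
  rw [twoPointMeasure, Measure.add_apply, Measure.smul_apply, Measure.smul_apply,
    measure_univ, measure_univ, smul_eq_mul, smul_eq_mul, mul_one, mul_one,
    ← ENNReal.ofReal_add (sub_nonneg.2 hq1) hq0, sub_add_cancel, ENNReal.ofReal_one]

end TwoPoint

def targetSemivariances (μ σ t : ℝ) : Set ℝ :=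
  {y : ℝ | ∃ P : Measure ℝ, IsProbabilityMeasure P ∧ Integrable (fun x => x ^ 2) P ∧
    (∫ x, x ∂P) = μ ∧ (∫ x, x ^ 2 ∂P) = μ ^ 2 + σ ^ 2 ∧
    y = ∫ x, (max (x - t) 0) ^ 2 ∂P}

theorem twoPoint_mem_targetSemivariances {μ σ t q a b : ℝ} (hq0 : 0 ≤ q) (hq1 : q ≤ 1)
    (hmean : (1 - q) * a + q * b = μ) (hsq : (1 - q) * a ^ 2 + q * b ^ 2 = μ ^ 2 + σ ^ 2) :
    (1 - q) * max (a - t) 0 ^ 2 + q * max (b - t) 0 ^ 2 ∈ targetSemivariances μ σ t :=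
  ⟨twoPointMeasure q a b, isProbabilityMeasure_twoPointMeasure a b hq0 hq1, integrable_twoPointMeasure a b _,
    (integral_twoPointMeasure a b hq0 hq1 _).trans hmean,
    (integral_twoPointMeasure a b hq0 hq1 _).trans hsq,
    (integral_twoPointMeasure a b hq0 hq1 fun x => max (x - t) 0 ^ 2).symm⟩

theorem sq_posPart_sub_le_sq_sub {s t : ℝ} (hst : s ≤ t) (x : ℝ) :
    max (x - t) 0 ^ 2 ≤ (x - s) ^ 2 := by
  rcases le_total (x - t) 0 with h | h
  · rw [max_eq_right h, zero_pow two_ne_zero]; positivity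
  · rw [max_eq_left h]; exact pow_le_pow_left₀ h (by linarith) 2

section SecondMoment

variable {P : Measure ℝ}

theorem integrable_id_of_integrable_sq [IsFiniteMeasure P] (hP : Integrable (fun x => x ^ 2) P) :
    Integrable (fun x => x) P :=
  ((memLp_two_iff_integrable_sq aestronglyMeasurable_id).2 hP).integrable one_le_two

theorem integrable_sub_sq [IsFiniteMeasure P] (hP : Integrable (fun x => x ^ 2) P) (s : ℝ) :
    Integrable (fun x => (x - s) ^ 2) P :=
  (((memLp_two_iff_integrable_sq aestronglyMeasurable_id).2 hP).sub (memLp_const s)).integrable_sq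

theorem integral_sub_sq [IsProbabilityMeasure P] (hP : Integrable (fun x => x ^ 2) P) (s : ℝ) :
    ∫ x, (x - s) ^ 2 ∂P = (∫ x, x ^ 2 ∂P) - 2 * s * (∫ x, x ∂P) + s ^ 2 := by
  have hid := integrable_id_of_integrable_sq hP
  have hexp : (fun x => (x - s) ^ 2) = fun x => x ^ 2 - 2 * s * x + s ^ 2 := by
    funext x; ring
  have hlin : Integrable (fun x => x ^ 2 - 2 * s * x) P := hP.sub (hid.const_mul _)
  rw [hexp, integral_add hlin (integrable_const _), integral_sub hP (hid.const_mul _),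
    integral_const_mul, integral_const, probReal_univ, one_smul]

end SecondMoment

theorem mem_upperBounds_targetSemivariances (μ σ t : ℝ) :
    σ ^ 2 + max (μ - t) 0 ^ 2 ∈ upperBounds (targetSemivariances μ σ t) := by
  rintro _ ⟨P, _, hsq, hmean, hvar, rfl⟩
  calc ∫ x, max (x - t) 0 ^ 2 ∂P ≤ ∫ x, (x - min t μ) ^ 2 ∂P :=
        integral_mono_of_nonneg (.of_forall fun _ => sq_nonneg _) (integrable_sub_sq hsq _)
          (.of_forall (sq_posPart_sub_le_sq_sub (min_le_left t μ)))
    _ = σ ^ 2 + (μ - min t μ) ^ 2 := by rw [integral_sub_sq hsq, hmean, hvar]; ring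
    _ = σ ^ 2 + max (μ - t) 0 ^ 2 := by rw [← max_sub_sub_left, sub_self]

theorem sq_add_sq_sub_mem_targetSemivariances {μ σ t : ℝ} (ht : t < μ) :
    σ ^ 2 + (μ - t) ^ 2 ∈ targetSemivariances μ σ t := by
  have hd : 0 < μ - t := sub_pos.2 ht
  have hD : 0 < (μ - t) ^ 2 + σ ^ 2 := by positivity
  convert twoPoint_mem_targetSemivariances (μ := μ) (σ := σ) (t := t)
    (q := (μ - t) ^ 2 / ((μ - t) ^ 2 + σ ^ 2)) (a := t) (b := μ + σ ^ 2 / (μ - t))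
    (by positivity) ((div_le_one hD).2 (le_add_of_nonneg_right (sq_nonneg σ)))
    (by field_simp; ring) (by field_simp; ring) using 1
  have hb : 0 ≤ μ + σ ^ 2 / (μ - t) - t := by
    have : 0 ≤ σ ^ 2 / (μ - t) := by positivity
    linarith
  rw [sub_self, max_self, max_eq_left hb]
  field_simp
  ring

theorem tendsto_mul_sq_div_add_sq (σ c : ℝ) :
    Tendsto (fun u => σ ^ 2 * u ^ 2 / (σ ^ 2 + (u + c) ^ 2)) atTop (𝓝 (σ ^ 2)) := by
  have h : Tendsto (fun u : ℝ => σ ^ 2 * u⁻¹ ^ 2 + (1 + c * u⁻¹) ^ 2) atTop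
      (𝓝 (σ ^ 2 * 0 ^ 2 + (1 + c * 0) ^ 2)) :=
    ((tendsto_inv_atTop_zero.pow 2).const_mul _).add
      ((tendsto_const_nhds.add (tendsto_inv_atTop_zero.const_mul c)).pow 2)
  have := (h.inv₀ (by norm_num)).const_mul (σ ^ 2)
  norm_num at this
  refine this.congr' ((eventually_gt_atTop 0).mono fun u hu => ?_)
  field_simp

theorem exists_gt_mem_targetSemivariances {μ σ t w : ℝ} (ht : μ ≤ t) (hw : w < σ ^ 2) :
    ∃ y ∈ targetSemivariances μ σ t, w < y := by
  obtain ⟨u, hwu, hu⟩ := (((tendsto_mul_sq_div_add_sq σ (t - μ)).eventually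
    (lt_mem_nhds hw)).and (eventually_gt_atTop 0)).exists
  have hd : 0 < u + (t - μ) := by linarith
  have hD : 0 < σ ^ 2 + (u + (t - μ)) ^ 2 := by positivity
  refine ⟨_, twoPoint_mem_targetSemivariances (μ := μ) (σ := σ) (t := t)
    (q := σ ^ 2 / (σ ^ 2 + (u + (t - μ)) ^ 2)) (a := μ - σ ^ 2 / (u + (t - μ))) (b := t + u)
    (by positivity) ((div_le_one hD).2 (le_add_of_nonneg_right (sq_nonneg _)))
    (by field_simp; ring) (by field_simp; ring), ?_⟩
  have ha : μ - σ ^ 2 / (u + (t - μ)) - t ≤ 0 := by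
    have : 0 ≤ σ ^ 2 / (u + (t - μ)) := by positivity
    linarith
  rw [max_eq_right ha, add_sub_cancel_left, max_eq_left hu.le]
  exact hwu.trans_eq (by ring)

theorem stmt_2_general (μ σ t : ℝ) :
    sSup {y : ℝ | ∃ P : Measure ℝ, IsProbabilityMeasure P ∧ Integrable (fun x => x ^ 2) P ∧
        (∫ x, x ∂P) = μ ∧ (∫ x, x ^ 2 ∂P) = μ ^ 2 + σ ^ 2 ∧
        y = ∫ x, (max (x - t) 0) ^ 2 ∂P}
      = σ ^ 2 + (max (μ - t) 0) ^ 2 := by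
  refine csSup_eq_of_forall_le_of_forall_lt_exists_gt
    ⟨_, twoPoint_mem_targetSemivariances (μ := μ) (σ := σ) (t := t)
      (q := 1 / 2) (a := μ - σ) (b := μ + σ) (by norm_num) (by norm_num) (by ring) (by ring)⟩
    (fun _ hy => mem_upperBounds_targetSemivariances μ σ t hy) fun w hw => ?_
  rcases lt_or_ge t μ with ht | ht
  · rw [max_eq_left (sub_pos.2 ht).le] at hw
    exact ⟨_, sq_add_sq_sub_mem_targetSemivariances ht, hw⟩
  · rw [max_eq_right (sub_nonpos.2 ht), zero_pow two_ne_zero, add_zero] at hw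
    exact exists_gt_mem_targetSemivariances ht hw

theorem stmt_2 (μ σ t : ℝ) (hσ : 0 < σ) :
    sSup {y : ℝ | ∃ P : Measure ℝ, IsProbabilityMeasure P ∧ Integrable (fun x => x ^ 2) P ∧
        (∫ x, x ∂P) = μ ∧ (∫ x, x ^ 2 ∂P) = μ ^ 2 + σ ^ 2 ∧
        y = ∫ x, (max (x - t) 0) ^ 2 ∂P}
      = σ ^ 2 + (max (μ - t) 0) ^ 2 :=
  stmt_2_general μ σ t
end

section
/- Let μ, t ∈ ℝ and σ > 0. The supremum of E[(X−t)₊²] over all symmetric distributions with mean μ and variance σ² equals: σ² + (t−μ)² if t ≤ μ − σ; (1/2)(μ − t + σ)² if μ − σ < t ≤ μ; and σ²/2 if t > μ. -/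
/-!
A law symmetric about `a` is invariant under `x ↦ 2a - x`; hence `a` is its mean `μ`, and
`2 E[(X - t)₊²] = E[g(X - μ)]` with `g u = (u - s)₊² + (-u - s)₊²`, `s = t - μ`. Any quadratic
majorant `g u ≤ c + b u²` therefore bounds `E[(X - t)₊²]` by `(c + b σ²) / 2`. The majorants
used touch `g` at `u = ±σ` when `s ≤ 0`, and only asymptotically (`g u ≤ u²`) when `s > 0`.
The bounds are attained, resp. approached as `p → 0`, by the laws putting mass `p² / 2` at
`μ ± σ / p` and the rest at `μ`.
-/

open MeasureTheory Filter Topology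

section Reflection

variable {P : Measure ℝ} {a : ℝ}

lemma map_reflect_eq_self_iff [IsFiniteMeasure P] :
    P.map (fun z => 2 * a - z) = P ↔ ∀ x, P {z | a + x < z} = P {z | z < a - x} := by
  have hmeas : Measurable (fun z : ℝ => 2 * a - z) := measurable_const.sub measurable_id
  constructor
  · intro h x
    change P (Set.Ioi (a + x)) = P (Set.Iio (a - x))
    conv_lhs => rw [← h]
    rw [Measure.map_apply hmeas measurableSet_Ioi]
    congr 1
    ext z
    simp only [Set.mem_preimage, Set.mem_Ioi, Set.mem_Iio]
    constructor <;> intro <;> linarith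
  · intro hsymm
    refine Measure.ext_of_Iic _ _ fun y => ?_
    have hIoi : P (Set.Ioi y) = P (Set.Iio (2 * a - y)) := by
      convert hsymm (y - a) using 2 <;> ring_nf <;> rfl
    have hpre : (fun z : ℝ => 2 * a - z) ⁻¹' Set.Iic y = (Set.Iio (2 * a - y))ᶜ := by
      ext z
      simp only [Set.mem_preimage, Set.mem_Iic, Set.mem_compl_iff, Set.mem_Iio, not_lt]
      constructor <;> intro <;> linarith
    rw [Measure.map_apply hmeas measurableSet_Iic, hpre, ← Set.compl_Ioi,
      measure_compl measurableSet_Iio (measure_ne_top _ _),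
      measure_compl measurableSet_Ioi (measure_ne_top _ _), hIoi]

lemma integral_comp_reflect (h : P.map (fun z => 2 * a - z) = P) (f : ℝ → ℝ) :
    ∫ x, f (2 * a - x) ∂P = ∫ x, f x ∂P := by
  conv_rhs => rw [← h]
  exact (integral_map_equiv (MeasurableEquiv.subLeft (2 * a)) f).symm

lemma integral_id_eq_of_map_reflect [IsProbabilityMeasure P]
    (h : P.map (fun z => 2 * a - z) = P) (hint : Integrable (fun x => x) P) :
    ∫ x, x ∂P = a := by
  have := integral_comp_reflect h id
  simp only [id, integral_sub (integrable_const _) hint, integral_const, probReal_univ,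
    one_smul] at this
  linarith

lemma two_mul_integral_le_of_add_reflect_le [IsProbabilityMeasure P]
    (h : P.map (fun z => 2 * a - z) = P) {f : ℝ → ℝ} (hf : Integrable f P)
    (hsq : Integrable (fun x => (x - a) ^ 2) P) {c b : ℝ}
    (hbd : ∀ u, f (a + u) + f (a - u) ≤ c + b * u ^ 2) :
    2 * ∫ x, f x ∂P ≤ c + b * ∫ x, (x - a) ^ 2 ∂P := by
  have hf' : Integrable (fun x => f (2 * a - x)) P := by
    rw [← h] at hf
    exact (integrable_map_equiv (MeasurableEquiv.subLeft (2 * a)) f).1 hf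
  calc 2 * ∫ x, f x ∂P = ∫ x, (f x + f (2 * a - x)) ∂P := by
        rw [integral_add hf hf', integral_comp_reflect h]; ring
    _ ≤ ∫ x, (c + b * (x - a) ^ 2) ∂P := by
        refine integral_mono (hf.add hf') ((integrable_const c).add (hsq.const_mul b)) fun x => ?_
        have := hbd (x - a)
        rwa [add_sub_cancel, show a - (x - a) = 2 * a - x by ring] at this
    _ = c + b * ∫ x, (x - a) ^ 2 ∂P := by
        rw [integral_add (integrable_const c) (hsq.const_mul b), integral_const_mul,
          integral_const, probReal_univ, one_smul]

end Reflection


lemma posPart_sq_add_le_two_mul (s u : ℝ) :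
    max (u - s) 0 ^ 2 + max (-u - s) 0 ^ 2 ≤ 2 * s ^ 2 + 2 * u ^ 2 := by
  rcases le_total (u - s) 0 with h₁ | h₁ <;> rcases le_total (-u - s) 0 with h₂ | h₂ <;>
    simp only [max_eq_right, max_eq_left, h₁, h₂] <;>
    nlinarith [sq_nonneg (u + s), sq_nonneg (u - s)]

lemma posPart_sq_add_le_sq {s : ℝ} (hs : 0 ≤ s) (u : ℝ) :
    max (u - s) 0 ^ 2 + max (-u - s) 0 ^ 2 ≤ u ^ 2 := by
  rcases le_total (u - s) 0 with h₁ | h₁ <;> rcases le_total (-u - s) 0 with h₂ | h₂ <;>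
    simp only [max_eq_right, max_eq_left, h₁, h₂] <;>
    nlinarith

lemma posPart_sq_add_le_of_mem_Ioc {s σ : ℝ} (hσ : 0 < σ) (hs : s ∈ Set.Ioc (-σ) 0)
    (u : ℝ) :
    max (u - s) 0 ^ 2 + max (-u - s) 0 ^ 2 ≤ -s * (σ - s) + (σ - s) / σ * u ^ 2 := by
  obtain ⟨hs₁, hs₂⟩ := hs
  have hmul : σ * (-s * (σ - s) + (σ - s) / σ * u ^ 2) = σ * (-s * (σ - s)) + (σ - s) * u ^ 2 := by
    field_simp
  rw [← mul_le_mul_iff_right₀ hσ, hmul]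
  rcases le_total (u - s) 0 with h₁ | h₁ <;> rcases le_total (-u - s) 0 with h₂ | h₂ <;>
    simp only [max_eq_right, max_eq_left, h₁, h₂]
  · nlinarith [mul_nonneg (mul_nonneg hσ.le (neg_nonneg.2 hs₂)) (by linarith : (0:ℝ) ≤ σ - s),
      mul_nonneg (by linarith : (0:ℝ) ≤ σ - s) (sq_nonneg u)]
  · nlinarith [mul_nonneg (neg_nonneg.2 hs₂) (sq_nonneg (u + σ)), sq_nonneg u]
  · nlinarith [mul_nonneg (neg_nonneg.2 hs₂) (sq_nonneg (u - σ)), sq_nonneg u]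
  · nlinarith [mul_nonneg (by linarith : (0:ℝ) ≤ σ + s) (mul_nonneg h₁ h₂),
      mul_nonneg (neg_nonneg.2 hs₂) (sq_nonneg (σ + s))]

section ThreePoint

variable (μ σ p : ℝ)

noncomputable def threePoint : Measure ℝ :=
  ENNReal.ofReal (1 - p ^ 2) • Measure.dirac μ +
    ENNReal.ofReal (p ^ 2 / 2) • (Measure.dirac (μ - σ / p) + Measure.dirac (μ + σ / p))

lemma isProbabilityMeasure_threePoint {p : ℝ} (hp : p ^ 2 ≤ 1) :
    IsProbabilityMeasure (threePoint μ σ p) := by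
  constructor
  simp only [threePoint, Measure.add_apply, Measure.smul_apply, measure_univ, smul_eq_mul,
    mul_one]
  rw [one_add_one_eq_two, ← ENNReal.ofReal_ofNat 2, ← ENNReal.ofReal_mul (by positivity),
    ← ENNReal.ofReal_add (by linarith) (by positivity), ← ENNReal.ofReal_one]
  ring_nf

lemma integrable_threePoint (f : ℝ → ℝ) : Integrable f (threePoint μ σ p) := by
  have hdirac (x : ℝ) : Integrable f (Measure.dirac x) := integrable_dirac enorm_lt_top
  exact ((hdirac _).smul_measure ENNReal.ofReal_ne_top).add_measure
    (((hdirac _).add_measure (hdirac _)).smul_measure ENNReal.ofReal_ne_top)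

lemma integral_threePoint {p : ℝ} (hp : p ^ 2 ≤ 1) (f : ℝ → ℝ) :
    ∫ x, f x ∂threePoint μ σ p =
      (1 - p ^ 2) * f μ + p ^ 2 / 2 * (f (μ - σ / p) + f (μ + σ / p)) := by
  have hdirac (x : ℝ) : Integrable f (Measure.dirac x) := integrable_dirac enorm_lt_top
  rw [threePoint, integral_add_measure ((hdirac _).smul_measure ENNReal.ofReal_ne_top)
      (((hdirac _).add_measure (hdirac _)).smul_measure ENNReal.ofReal_ne_top),
    integral_smul_measure, integral_smul_measure, integral_add_measure (hdirac _) (hdirac _),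
    integral_dirac, integral_dirac, integral_dirac, ENNReal.toReal_ofReal (by linarith),
    ENNReal.toReal_ofReal (by positivity), smul_eq_mul, smul_eq_mul]

lemma map_reflect_threePoint :
    (threePoint μ σ p).map (fun z => 2 * μ - z) = threePoint μ σ p := by
  have hmeas : Measurable (fun z : ℝ => 2 * μ - z) := measurable_const.sub measurable_id
  simp only [threePoint, Measure.map_add _ _ hmeas, Measure.map_smul, Measure.map_dirac' hmeas]
  rw [add_comm (Measure.dirac (2 * μ - (μ - σ / p)))]
  ring_nf

lemma integral_id_threePoint {p : ℝ} (hp : p ^ 2 ≤ 1) :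
    ∫ x, x ∂threePoint μ σ p = μ := by
  rw [integral_threePoint μ σ hp]
  ring

lemma integral_sq_threePoint {p : ℝ} (hp₀ : p ≠ 0) (hp : p ^ 2 ≤ 1) :
    ∫ x, x ^ 2 ∂threePoint μ σ p = μ ^ 2 + σ ^ 2 := by
  rw [integral_threePoint μ σ hp]
  field_simp
  ring

end ThreePoint

section StopLoss

variable {μ σ t : ℝ}

variable (μ σ t) in
/-- The values of `E[(X - t)₊²]` as the law of `X` ranges over `𝓛_S(μ, σ)`. -/
def stopLossSqValues : Set ℝ :=
  {y : ℝ | ∃ P : Measure ℝ, IsProbabilityMeasure P ∧ Integrable (fun x => x ^ 2) P ∧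
    (∃ a : ℝ, ∀ x : ℝ, P {z | a + x < z} = P {z | z < a - x}) ∧
    (∫ x, x ∂P) = μ ∧ (∫ x, x ^ 2 ∂P) = μ ^ 2 + σ ^ 2 ∧ y = ∫ x, (max (x - t) 0) ^ 2 ∂P}

lemma mem_upperBounds_stopLossSqValues {c b : ℝ}
    (hbd : ∀ u, max (u - (t - μ)) 0 ^ 2 + max (-u - (t - μ)) 0 ^ 2 ≤ c + b * u ^ 2) :
    (c + b * σ ^ 2) / 2 ∈ upperBounds (stopLossSqValues μ σ t) := by
  rintro _ ⟨P, hP, hsq, ⟨a, hsymm⟩, hmean, hvar, rfl⟩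
  have hL2 : MemLp (fun x : ℝ => x) 2 P :=
    (memLp_two_iff_integrable_sq aestronglyMeasurable_id).2 hsq
  have hid : Integrable (fun x : ℝ => x) P := hL2.integrable one_le_two
  have hrefl := map_reflect_eq_self_iff.2 hsymm
  obtain rfl : a = μ := hmean ▸ (integral_id_eq_of_map_reflect hrefl hid).symm
  have hcentered : ∫ x, (x - a) ^ 2 ∂P = σ ^ 2 := by
    have := ProbabilityTheory.variance_eq_sub hL2
    rw [ProbabilityTheory.variance_eq_integral aemeasurable_id'] at this
    simpa [hmean, hvar] using this
  have hsq' : Integrable (fun x => (x - a) ^ 2) P := (hL2.sub (memLp_const a)).integrable_sq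
  have hf : Integrable (fun x => max (x - t) 0 ^ 2) P := by
    refine (hL2.sub (memLp_const t)).integrable_sq.mono' (by fun_prop) ?_
    refine Filter.Eventually.of_forall fun x => ?_
    rcases le_total (x - t) 0 with h | h <;> simp [h, sq_nonneg]
  have := two_mul_integral_le_of_add_reflect_le hrefl hf hsq' (c := c) (b := b) fun u => by
    rw [show a + u - t = u - (t - a) by ring, show a - u - t = -u - (t - a) by ring]
    exact hbd u
  rw [hcentered] at this
  linarith

lemma threePoint_mem_stopLossSqValues {p : ℝ} (hp₀ : 0 < p) (hp₁ : p ≤ 1) :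
    (1 - p ^ 2) * max (μ - t) 0 ^ 2 +
      p ^ 2 / 2 * (max (μ - σ / p - t) 0 ^ 2 + max (μ + σ / p - t) 0 ^ 2) ∈
      stopLossSqValues μ σ t := by
  have hp : p ^ 2 ≤ 1 := pow_le_one₀ hp₀.le hp₁
  have := isProbabilityMeasure_threePoint μ σ hp
  exact ⟨threePoint μ σ p, this, integrable_threePoint μ σ p _,
    ⟨μ, map_reflect_eq_self_iff.1 (map_reflect_threePoint μ σ p)⟩,
    integral_id_threePoint μ σ hp, integral_sq_threePoint μ σ hp₀.ne' hp,
    (integral_threePoint μ σ hp fun x => max (x - t) 0 ^ 2).symm⟩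

lemma isGreatest_stopLossSqValues_of_le (hσ : 0 < σ) (h : t ≤ μ - σ) :
    IsGreatest (stopLossSqValues μ σ t) (σ ^ 2 + (t - μ) ^ 2) := by
  constructor
  · convert threePoint_mem_stopLossSqValues one_pos le_rfl using 1
    rw [div_one, max_eq_left (by linarith : 0 ≤ μ - σ - t),
      max_eq_left (by linarith : 0 ≤ μ + σ - t)]
    ring
  · convert mem_upperBounds_stopLossSqValues (posPart_sq_add_le_two_mul (t - μ)) using 1
    ring

lemma isGreatest_stopLossSqValues_of_mem_Ioc (hσ : 0 < σ) (h : t ∈ Set.Ioc (μ - σ) μ) :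
    IsGreatest (stopLossSqValues μ σ t) ((μ - t + σ) ^ 2 / 2) := by
  obtain ⟨h₁, h₂⟩ := h
  constructor
  · convert threePoint_mem_stopLossSqValues one_pos le_rfl using 1
    rw [div_one, max_eq_right (by linarith : μ - σ - t ≤ 0),
      max_eq_left (by linarith : 0 ≤ μ + σ - t)]
    ring
  · convert mem_upperBounds_stopLossSqValues
      (posPart_sq_add_le_of_mem_Ioc (s := t - μ) hσ ⟨by linarith, by linarith⟩) using 1
    field_simp
    ring

lemma isLUB_stopLossSqValues_of_lt (hσ : 0 < σ) (h : μ < t) :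
    IsLUB (stopLossSqValues μ σ t) (σ ^ 2 / 2) := by
  have hupper : σ ^ 2 / 2 ∈ upperBounds (stopLossSqValues μ σ t) := by
    simpa using mem_upperBounds_stopLossSqValues (c := 0) (b := 1) fun u => by
      simpa using posPart_sq_add_le_sq (by linarith) u
  refine ⟨hupper, fun B hB => ?_⟩
  have hd : 0 < t - μ := by linarith
  have hlim : Tendsto (fun p => (σ - p * (t - μ)) ^ 2 / 2) (𝓝[>] 0) (𝓝 (σ ^ 2 / 2)) := by
    have : Continuous fun p : ℝ => (σ - p * (t - μ)) ^ 2 / 2 := by fun_prop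
    simpa using (this.tendsto 0).mono_left nhdsWithin_le_nhds
  refine le_of_tendsto hlim ?_
  filter_upwards [Ioo_mem_nhdsGT (lt_min one_pos (div_pos hσ hd))] with p ⟨hp₀, hp⟩
  have hpσ : t - μ ≤ σ / p := by
    rw [le_div_iff₀ hp₀, mul_comm]
    exact (le_div_iff₀ hd).1 (hp.le.trans (min_le_right _ _))
  refine (Eq.le ?_).trans
    (hB (threePoint_mem_stopLossSqValues hp₀ (hp.le.trans (min_le_left _ _))))
  rw [max_eq_right (by linarith : μ - t ≤ 0),
    max_eq_right (by linarith [div_pos hσ hp₀] : μ - σ / p - t ≤ 0),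
    max_eq_left (by linarith : 0 ≤ μ + σ / p - t)]
  field_simp
  ring

end StopLoss

theorem stmt_3 (μ σ t : ℝ) (hσ : 0 < σ) :
    sSup {y : ℝ | ∃ P : Measure ℝ, IsProbabilityMeasure P ∧ Integrable (fun x => x ^ 2) P ∧
        (∃ a : ℝ, ∀ x : ℝ, P {z | a + x < z} = P {z | z < a - x}) ∧
        (∫ x, x ∂P) = μ ∧ (∫ x, x ^ 2 ∂P) = μ ^ 2 + σ ^ 2 ∧
        y = ∫ x, (max (x - t) 0) ^ 2 ∂P}
      = if t ≤ μ - σ then σ ^ 2 + (t - μ) ^ 2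
        else if t ≤ μ then (μ - t + σ) ^ 2 / 2
        else σ ^ 2 / 2 := by
  change sSup (stopLossSqValues μ σ t) = _
  split_ifs with h₁ h₂
  · exact (isGreatest_stopLossSqValues_of_le hσ h₁).csSup_eq
  · exact (isGreatest_stopLossSqValues_of_mem_Ioc hσ ⟨not_le.1 h₁, h₂⟩).csSup_eq
  · exact (isLUB_stopLossSqValues_of_lt hσ (not_le.1 h₂)).csSup_eq
      ⟨_, threePoint_mem_stopLossSqValues one_pos le_rfl⟩
end

section
/- Let μ, t ∈ ℝ and σ > 0. If X is a symmetric random variable with mean μ and variance σ² and t > μ, then E[(X−t)₊²] < σ²/2 strictly; moreover the value σ²/2 is approached by three-point symmetric distributions [μ − √(σ²/(2ε)), ε; μ, 1−2ε; μ + √(σ²/(2ε)), ε] as ε → 0, so sup over 𝓛_S(μ,σ) equals σ²/2 and is not attained. -/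
/-!
A distribution symmetric about `a` is invariant under `x ↦ 2a - x`; integrating `x` shows that its
centre is its mean `μ`, and since `(x - μ)₊² + (μ - x)₊² = (x - μ)²` the two reflected halves split
the variance equally, so `E[(X - μ)₊²] = σ²/2`. For `t > μ` the integrand `(x - t)₊²` is strictly
below `(x - μ)₊²` on `{x > μ}`, a set of positive mass because `σ > 0`; hence the strict bound.
On the three-point law with `s = √(σ²/(2ε)) ≥ t - μ` (true for small `ε`) only the atom `μ + s`
contributes, giving `ε (μ + s - t)² = (σ/√2 - (t - μ)√ε)² → σ²/2`.
-/

open MeasureTheory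

/-- The set of values of the target semi-variance over symmetric distributions
with mean `μ` and variance `σ²`. -/
def symTSVSet (μ σ t : ℝ) : Set ℝ :=
  {y : ℝ | ∃ P : Measure ℝ, IsProbabilityMeasure P ∧ Integrable (fun x => x ^ 2) P ∧
    (∃ a : ℝ, ∀ x : ℝ, P {z | a + x < z} = P {z | z < a - x}) ∧
    (∫ x, x ∂P) = μ ∧ (∫ x, x ^ 2 ∂P) = μ ^ 2 + σ ^ 2 ∧
    y = ∫ x, (max (x - t) 0) ^ 2 ∂P}

open Set Filter Topology

def IsSymmetricAbout (P : Measure ℝ) (a : ℝ) : Prop :=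
  P.map (fun x => 2 * a - x) = P

theorem isSymmetricAbout_iff_measure_Ioi_eq {P : Measure ℝ} [IsFiniteMeasure P] {a : ℝ} :
    IsSymmetricAbout P a ↔ ∀ x, P (Ioi (a + x)) = P (Iio (a - x)) := by
  have hr : Measurable fun x : ℝ => 2 * a - x := measurable_const.sub measurable_id
  constructor
  · intro h x
    conv_lhs => rw [← h]
    rw [Measure.map_apply hr measurableSet_Ioi, preimage_const_sub_Ioi,
      show 2 * a - (a + x) = a - x by ring]
  · intro h
    refine Measure.ext_of_Iic _ _ fun b => ?_
    have hb : P (Iio (2 * a - b)) = P (Ioi b) := by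
      rw [show 2 * a - b = a - (b - a) by ring, ← h, add_sub_cancel]
    rw [Measure.map_apply hr measurableSet_Iic, preimage_const_sub_Iic, ← compl_Iio, ← compl_Ioi,
      measure_compl measurableSet_Iio (measure_ne_top _ _),
      measure_compl measurableSet_Ioi (measure_ne_top _ _), hb]

theorem max_sub_zero_sq_le {a t : ℝ} (hat : a ≤ t) (x : ℝ) :
    max (x - t) 0 ^ 2 ≤ max (x - a) 0 ^ 2 :=
  pow_le_pow_left₀ (le_max_right _ _) (max_le_max (by linarith) le_rfl) 2

theorem integrable_max_sub_zero_sq {P : Measure ℝ} {a t : ℝ} (hat : a ≤ t)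
    (hint : Integrable (fun x => (x - a) ^ 2) P) : Integrable (fun x => max (x - t) 0 ^ 2) P := by
  refine hint.mono' (by fun_prop) (ae_of_all _ fun x => ?_)
  rw [Real.norm_of_nonneg (sq_nonneg _), ← sq_abs (x - a)]
  exact pow_le_pow_left₀ (le_max_right _ _)
    (max_le (by linarith [le_abs_self (x - a)]) (abs_nonneg _)) 2

namespace IsSymmetricAbout

variable {P : Measure ℝ} {a : ℝ}

theorem integral_comp_sub {E : Type*} [NormedAddCommGroup E] [NormedSpace ℝ E]
    (h : IsSymmetricAbout P a) (f : ℝ → E) : ∫ x, f (2 * a - x) ∂P = ∫ x, f x ∂P := by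
  conv_rhs => rw [← h]
  exact ((measurableEmbedding_subLeft (2 * a)).integral_map f).symm

theorem integrable_comp_sub {E : Type*} [NormedAddCommGroup E] (h : IsSymmetricAbout P a)
    {f : ℝ → E} (hf : Integrable f P) : Integrable (fun x => f (2 * a - x)) P := by
  rw [← h] at hf
  exact (measurableEmbedding_subLeft (2 * a)).integrable_map_iff.mp hf

theorem integral_id_eq [IsProbabilityMeasure P] (h : IsSymmetricAbout P a)
    (hint : Integrable (fun x => x) P) : ∫ x, x ∂P = a := by
  have := h.integral_comp_sub fun x => x
  rw [integral_sub (integrable_const _) hint, integral_const, probReal_univ, one_smul] at this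
  linarith

theorem integral_max_sub_zero_sq (h : IsSymmetricAbout P a)
    (hint : Integrable (fun x => (x - a) ^ 2) P) :
    ∫ x, max (x - a) 0 ^ 2 ∂P = (∫ x, (x - a) ^ 2 ∂P) / 2 := by
  set g : ℝ → ℝ := fun x => max (x - a) 0 ^ 2
  have hsplit : ∀ x, g x + g (2 * a - x) = (x - a) ^ 2 := fun x => by
    rcases le_total x a with hx | hx
    · simp [g, max_eq_right (sub_nonpos.2 hx), max_eq_left (by linarith : 0 ≤ 2 * a - x - a)]
      ring
    · simp [g, max_eq_left (sub_nonneg.2 hx), max_eq_right (by linarith : 2 * a - x - a ≤ 0)]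
  have hg : Integrable g P := integrable_max_sub_zero_sq le_rfl hint
  have := integral_add hg (h.integrable_comp_sub hg)
  rw [h.integral_comp_sub g, integral_congr_ae (ae_of_all _ hsplit)] at this
  linarith

theorem integral_max_sub_zero_sq_lt (h : IsSymmetricAbout P a)
    (hint : Integrable (fun x => (x - a) ^ 2) P) (hvar : 0 < ∫ x, (x - a) ^ 2 ∂P) {t : ℝ}
    (hat : a < t) : ∫ x, max (x - t) 0 ^ 2 ∂P < (∫ x, (x - a) ^ 2 ∂P) / 2 := by
  rw [← h.integral_max_sub_zero_sq hint]
  set g : ℝ → ℝ := fun x => max (x - a) 0 ^ 2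
  set f : ℝ → ℝ := fun x => max (x - t) 0 ^ 2
  have hg : Integrable g P := integrable_max_sub_zero_sq le_rfl hint
  have hf : Integrable f P := integrable_max_sub_zero_sq hat.le hint
  have hlt_of_gt : ∀ x, a < x → f x < g x := fun x hx => by
    simp only [f, g, max_eq_left (by linarith : 0 ≤ x - a)]
    exact pow_lt_pow_left₀ (max_lt (by linarith) (by linarith)) (le_max_right _ _) two_ne_zero
  have hsupp_g : Function.support g ⊆ Ioi a := fun x hx =>
    mem_Ioi.2 <| lt_of_not_ge fun hxa => hx (by simp [g, max_eq_right (sub_nonpos.2 hxa)])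
  have hmass : 0 < P (Ioi a) := by
    have := h.integral_max_sub_zero_sq hint ▸ half_pos hvar
    rw [integral_pos_iff_support_of_nonneg (fun x => sq_nonneg _) hg] at this
    exact this.trans_le (measure_mono hsupp_g)
  have hgap : 0 < ∫ x, (g x - f x) ∂P := by
    rw [integral_pos_iff_support_of_nonneg (fun x => sub_nonneg.2 (max_sub_zero_sq_le hat.le x))
      (hg.sub hf)]
    exact hmass.trans_le (measure_mono fun x hx => (sub_pos.2 (hlt_of_gt x hx)).ne')
  rw [integral_sub hg hf] at hgap
  linarith

end IsSymmetricAbout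

theorem lt_of_mem_symTSVSet {μ σ t : ℝ} (hσ : 0 < σ) (ht : μ < t) {y : ℝ}
    (hy : y ∈ symTSVSet μ σ t) : y < σ ^ 2 / 2 := by
  obtain ⟨P, hP, hsq, ⟨a, hsym⟩, hmean, hsecond, rfl⟩ := hy
  have hsymm : IsSymmetricAbout P a := isSymmetricAbout_iff_measure_Ioi_eq.2 hsym
  have hL2 : MemLp (fun x => x) 2 P :=
    (memLp_two_iff_integrable_sq measurable_id.aestronglyMeasurable).2 hsq
  obtain rfl : a = μ := (hsymm.integral_id_eq (hL2.integrable one_le_two)).symm.trans hmean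
  have hvar : ∫ x, (x - a) ^ 2 ∂P = σ ^ 2 := by
    have := (ProbabilityTheory.variance_eq_integral measurable_id.aemeasurable).symm.trans
      (ProbabilityTheory.variance_eq_sub hL2)
    simp only [id, Pi.pow_apply, hmean, hsecond] at this
    linarith
  have := hsymm.integral_max_sub_zero_sq_lt (hL2.sub (memLp_const a)).integrable_sq
    (hvar ▸ by positivity) ht
  rwa [hvar] at this

noncomputable def threePointMeasure {α : Type*} [MeasurableSpace α] (p q r : ℝ) (x y z : α) :
    Measure α :=
  ENNReal.ofReal p • Measure.dirac x + ENNReal.ofReal q • Measure.dirac y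
    + ENNReal.ofReal r • Measure.dirac z

theorem isProbabilityMeasure_threePointMeasure {α : Type*} [MeasurableSpace α] {p q r : ℝ}
    (hp : 0 ≤ p) (hq : 0 ≤ q) (hr : 0 ≤ r) (h : p + q + r = 1) (x y z : α) :
    IsProbabilityMeasure (threePointMeasure p q r x y z) :=
  ⟨by simp [threePointMeasure, ← ENNReal.ofReal_add, hp, hq, hr, add_nonneg, h]⟩

section ThreePoint

variable {α E : Type*} [MeasurableSpace α] [MeasurableSingletonClass α] [NormedAddCommGroup E]
  {p q r : ℝ}

theorem integrable_threePointMeasure (x y z : α) (f : α → E) :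
    Integrable f (threePointMeasure p q r x y z) :=
  have hδ : ∀ (c : ℝ) w, Integrable f (ENNReal.ofReal c • Measure.dirac w) := fun _ _ =>
    (integrable_dirac enorm_lt_top).smul_measure ENNReal.ofReal_ne_top
  ((hδ p x).add_measure (hδ q y)).add_measure (hδ r z)

theorem integral_threePointMeasure [NormedSpace ℝ E] [CompleteSpace E] (hp : 0 ≤ p) (hq : 0 ≤ q)
    (hr : 0 ≤ r) (x y z : α) (f : α → E) :
    ∫ w, f w ∂threePointMeasure p q r x y z = p • f x + q • f y + r • f z := by
  have hδ : ∀ (c : ℝ) w, Integrable f (ENNReal.ofReal c • Measure.dirac w) := fun _ _ =>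
    (integrable_dirac enorm_lt_top).smul_measure ENNReal.ofReal_ne_top
  rw [threePointMeasure, integral_add_measure ((hδ p x).add_measure (hδ q y)) (hδ r z),
    integral_add_measure (hδ p x) (hδ q y), integral_smul_measure, integral_smul_measure,
    integral_smul_measure, integral_dirac, integral_dirac, integral_dirac,
    ENNReal.toReal_ofReal hp, ENNReal.toReal_ofReal hq, ENNReal.toReal_ofReal hr]

end ThreePoint

theorem isSymmetricAbout_threePointMeasure (p q c s : ℝ) :
    IsSymmetricAbout (threePointMeasure p q p (c - s) c (c + s)) c := by
  have hr : Measurable fun x : ℝ => 2 * c - x := measurable_const.sub measurable_id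
  rw [IsSymmetricAbout, threePointMeasure, Measure.map_add _ _ hr, Measure.map_add _ _ hr,
    Measure.map_smul, Measure.map_smul, Measure.map_smul, Measure.map_dirac, Measure.map_dirac,
    Measure.map_dirac, show 2 * c - (c - s) = c + s by ring, show 2 * c - c = c by ring,
    show 2 * c - (c + s) = c - s by ring]
  abel

noncomputable def symThreePoint (μ σ ε : ℝ) : Measure ℝ :=
  threePointMeasure ε (1 - 2 * ε) ε (μ - √(σ ^ 2 / (2 * ε))) μ (μ + √(σ ^ 2 / (2 * ε)))

theorem integral_symThreePoint_mem_symTSVSet {μ σ ε : ℝ} (t : ℝ) (hε : 0 < ε) (hε' : ε ≤ 1 / 2) :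
    ∫ x, max (x - t) 0 ^ 2 ∂symThreePoint μ σ ε ∈ symTSVSet μ σ t := by
  have hq : 0 ≤ 1 - 2 * ε := by linarith
  have hs : ε * √(σ ^ 2 / (2 * ε)) ^ 2 = σ ^ 2 / 2 := by
    rw [Real.sq_sqrt (by positivity)]
    field_simp
  have hP := isProbabilityMeasure_threePointMeasure hε.le hq hε.le (by ring)
    (μ - √(σ ^ 2 / (2 * ε))) μ (μ + √(σ ^ 2 / (2 * ε)))
  refine ⟨_, hP, integrable_threePointMeasure _ _ _ _,
    ⟨μ, isSymmetricAbout_iff_measure_Ioi_eq.1 (isSymmetricAbout_threePointMeasure _ _ _ _)⟩,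
    ?_, ?_, rfl⟩
  · rw [integral_threePointMeasure hε.le hq hε.le]
    simp only [smul_eq_mul]
    ring
  · rw [integral_threePointMeasure hε.le hq hε.le]
    simp only [smul_eq_mul]
    linear_combination 2 * hs

theorem integral_symThreePoint_eq {μ σ ε t : ℝ} (hε : 0 < ε) (hε' : ε ≤ 1 / 2) (hμt : μ ≤ t)
    (hs : t - μ ≤ √(σ ^ 2 / (2 * ε))) :
    ∫ x, max (x - t) 0 ^ 2 ∂symThreePoint μ σ ε = (√(σ ^ 2 / 2) - (t - μ) * √ε) ^ 2 := by
  set s := √(σ ^ 2 / (2 * ε))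
  have hkey : √ε * s = √(σ ^ 2 / 2) := by
    rw [← Real.sqrt_mul hε.le]
    congr 1
    field_simp
  rw [symThreePoint, integral_threePointMeasure hε.le (by linarith) hε.le, ← hkey,
    max_eq_right (by linarith [Real.sqrt_nonneg (σ ^ 2 / (2 * ε))] : μ - s - t ≤ 0),
    max_eq_right (by linarith : μ - t ≤ 0), max_eq_left (by linarith : 0 ≤ μ + s - t)]
  simp only [smul_eq_mul]
  linear_combination (-(μ + s - t) ^ 2) * Real.sq_sqrt hε.le

theorem tendsto_integral_symThreePoint {μ σ t : ℝ} (hσ : σ ≠ 0) (hμt : μ ≤ t) :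
    Tendsto (fun ε => ∫ x, max (x - t) 0 ^ 2 ∂symThreePoint μ σ ε) (𝓝[>] 0)
      (𝓝 (σ ^ 2 / 2)) := by
  have hlim : Tendsto (fun ε => (√(σ ^ 2 / 2) - (t - μ) * √ε) ^ 2) (𝓝[>] 0) (𝓝 (σ ^ 2 / 2)) := by
    have hcont : Continuous fun ε => (√(σ ^ 2 / 2) - (t - μ) * √ε) ^ 2 := by fun_prop
    have h0 : (√(σ ^ 2 / 2) - (t - μ) * √0) ^ 2 = σ ^ 2 / 2 := by
      rw [Real.sqrt_zero, mul_zero, sub_zero, Real.sq_sqrt (by positivity)]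
    have := (hcont.tendsto 0).mono_left (nhdsWithin_le_nhds (s := Ioi 0))
    rwa [h0] at this
  have hs : Tendsto (fun ε => √(σ ^ 2 / (2 * ε))) (𝓝[>] 0) atTop :=
    Real.tendsto_sqrt_atTop.comp <|
      (tendsto_inv_nhdsGT_zero.const_mul_atTop (by positivity : 0 < σ ^ 2 / 2)).congr
        fun ε => by ring
  refine hlim.congr' ?_
  filter_upwards [Ioo_mem_nhdsGT one_half_pos, hs.eventually_ge_atTop (t - μ)] with ε hε hst
  exact (integral_symThreePoint_eq hε.1 hε.2.le hμt hst).symm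

theorem stmt_4 (μ σ t : ℝ) (hσ : 0 < σ) (ht : μ < t) :
    (∀ y ∈ symTSVSet μ σ t, y < σ ^ 2 / 2) ∧
    Filter.Tendsto (fun ε : ℝ =>
        ∫ x, (max (x - t) 0) ^ 2
          ∂(ENNReal.ofReal ε • Measure.dirac (μ - Real.sqrt (σ ^ 2 / (2 * ε)))
            + ENNReal.ofReal (1 - 2 * ε) • Measure.dirac μ
            + ENNReal.ofReal ε • Measure.dirac (μ + Real.sqrt (σ ^ 2 / (2 * ε)))))
      (nhdsWithin 0 (Set.Ioi 0)) (nhds (σ ^ 2 / 2)) ∧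
    sSup (symTSVSet μ σ t) = σ ^ 2 / 2 ∧
    σ ^ 2 / 2 ∉ symTSVSet μ σ t := by
  have hlt : ∀ y ∈ symTSVSet μ σ t, y < σ ^ 2 / 2 := fun y => lt_of_mem_symTSVSet hσ ht
  have hlim := tendsto_integral_symThreePoint (t := t) (μ := μ) hσ.ne' ht.le
  have hcl : σ ^ 2 / 2 ∈ closure (symTSVSet μ σ t) :=
    mem_closure_of_tendsto hlim <| mem_of_superset (Ioo_mem_nhdsGT one_half_pos)
      fun ε hε => integral_symThreePoint_mem_symTSVSet t hε.1 hε.2.le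
  refine ⟨hlt, hlim, ?_, fun h => (hlt _ h).false⟩
  exact (isLUB_of_mem_closure (fun y hy => (hlt y hy).le) hcl).csSup_eq
    (closure_nonempty_iff.1 ⟨_, hcl⟩)
end

section
/- For any distribution F on ℝ with mean μ and variance σ² > 0, there exists a two-point distribution F* with the same mean μ and variance σ² whose support is contained in the interval [ess-inf F, ess-sup F]. Moreover, if F is symmetric, F* can be chosen symmetric (about μ). -/
open MeasureTheory

lemma integrable_dirac' {f : ℝ → ℝ} (hf : Measurable f) (a : ℝ) :
    Integrable f (Measure.dirac a) := by
  refine ⟨hf.aestronglyMeasurable, ?_⟩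
  have : (∫⁻ x, ‖f x‖₊ ∂Measure.dirac a) = ‖f a‖₊ :=
    lintegral_dirac' a (hf.nnnorm.coe_nnreal_ennreal)
  simp [HasFiniteIntegral, this]

lemma two_point_integral (f : ℝ → ℝ) (hf : Measurable f) (a b p q : ℝ)
    (hp : 0 ≤ p) (hq : 0 ≤ q) :
    ∫ x, f x ∂(ENNReal.ofReal p • Measure.dirac a + ENNReal.ofReal q • Measure.dirac b)
      = p * f a + q * f b := by
  have hia := (integrable_dirac' hf a).smul_measure (c := ENNReal.ofReal p) ENNReal.ofReal_ne_top
  have hib := (integrable_dirac' hf b).smul_measure (c := ENNReal.ofReal q) ENNReal.ofReal_ne_top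
  rw [integral_add_measure hia hib, integral_smul_measure, integral_smul_measure,
    integral_dirac, integral_dirac, ENNReal.toReal_ofReal hp, ENNReal.toReal_ofReal hq]
  simp [smul_eq_mul]

lemma integrable_id' (P : Measure ℝ) [IsProbabilityMeasure P]
    (hint : Integrable (fun x => x ^ 2) P) : Integrable (fun x : ℝ => x) P := by
  refine (hint.add (integrable_const 1)).mono' measurable_id.aestronglyMeasurable ?_
  filter_upwards with x
  have : |x| ≤ x ^ 2 + 1 := by nlinarith [abs_nonneg x, sq_abs x, sq_nonneg (|x| - 1)]
  simpa [Real.norm_eq_abs] using this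

lemma bhatia_davis (μ σ : ℝ) (P : Measure ℝ) [IsProbabilityMeasure P]
    (hint : Integrable (fun x => x ^ 2) P)
    (hmean : (∫ x, x ∂P) = μ) (h2 : (∫ x, x ^ 2 ∂P) = μ ^ 2 + σ ^ 2)
    {M c : ℝ} (hM : ∀ᵐ x ∂P, x ≤ M) (hc : ∀ᵐ x ∂P, c ≤ x) :
    σ ^ 2 ≤ (M - μ) * (μ - c) := by
  have hid := integrable_id' P hint
  have ha : Integrable (fun x : ℝ => (M + c) * x) P := hid.const_mul _
  have hab : Integrable (fun x : ℝ => (M + c) * x - x ^ 2) P := ha.sub hint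
  have hI : (∫ x, ((M + c) * x - x ^ 2 - M * c) ∂P)
      = (M + c) * μ - (μ ^ 2 + σ ^ 2) - M * c := by
    rw [integral_sub hab (integrable_const _), integral_sub ha hint, integral_const_mul,
      hmean, h2]
    simp
  have hnn : 0 ≤ ∫ x, ((M + c) * x - x ^ 2 - M * c) ∂P := by
    refine integral_nonneg_of_ae ?_
    filter_upwards [hM, hc] with x h1 h2
    simp only [Pi.zero_apply]
    nlinarith [mul_nonneg (sub_nonneg.2 h1) (sub_nonneg.2 h2)]
  rw [hI] at hnn
  nlinarith

lemma mean_lt_of_ae_le (μ σ : ℝ) (hσ : 0 < σ) (P : Measure ℝ) [IsProbabilityMeasure P]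
    (hint : Integrable (fun x => x ^ 2) P)
    (hmean : (∫ x, x ∂P) = μ) (h2 : (∫ x, x ^ 2 ∂P) = μ ^ 2 + σ ^ 2)
    {M : ℝ} (hM : ∀ᵐ x ∂P, x ≤ M) : μ < M := by
  have hid := integrable_id' P hint
  have hle : μ ≤ M := by
    rw [← hmean]
    calc (∫ x, x ∂P) ≤ ∫ _, M ∂P := integral_mono_ae hid (integrable_const M) hM
    _ = M := by simp
  rcases hle.lt_or_eq with h | h
  · exact h
  · exfalso
    have hsub : Integrable (fun x : ℝ => M - x) P := (integrable_const M).sub hid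
    have hz : (∫ x, (M - x) ∂P) = 0 := by
      rw [integral_sub (integrable_const M) hid, hmean, ← h]; simp
    have hnn : 0 ≤ᵐ[P] fun x => M - x := by
      filter_upwards [hM] with x hx
      simpa using sub_nonneg.2 hx
    have heq := (integral_eq_zero_iff_of_nonneg_ae hnn hsub).1 hz
    have hx2 : (fun x : ℝ => x ^ 2) =ᵐ[P] fun _ => μ ^ 2 := by
      filter_upwards [heq] with x hx
      have hx' : M - x = 0 := hx
      have : x = μ := by rw [h]; linarith
      simp [this]
    have : (∫ x, x ^ 2 ∂P) = μ ^ 2 := by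
      rw [integral_congr_ae hx2]; simp
    rw [h2] at this
    nlinarith

lemma lt_mean_of_ae_le (μ σ : ℝ) (hσ : 0 < σ) (P : Measure ℝ) [IsProbabilityMeasure P]
    (hint : Integrable (fun x => x ^ 2) P)
    (hmean : (∫ x, x ∂P) = μ) (h2 : (∫ x, x ^ 2 ∂P) = μ ^ 2 + σ ^ 2)
    {c : ℝ} (hc : ∀ᵐ x ∂P, c ≤ x) : c < μ := by
  have hid := integrable_id' P hint
  have hle : c ≤ μ := by
    rw [← hmean]
    calc c = ∫ _, c ∂P := by simp
    _ ≤ ∫ x, x ∂P := integral_mono_ae (integrable_const c) hid hc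
  rcases hle.lt_or_eq with h | h
  · exact h
  · exfalso
    have hsub : Integrable (fun x : ℝ => x - c) P := hid.sub (integrable_const c)
    have hz : (∫ x, (x - c) ∂P) = 0 := by
      rw [integral_sub hid (integrable_const c), hmean, h]; simp
    have hnn : 0 ≤ᵐ[P] fun x => x - c := by
      filter_upwards [hc] with x hx
      simpa using sub_nonneg.2 hx
    have heq := (integral_eq_zero_iff_of_nonneg_ae hnn hsub).1 hz
    have hx2 : (fun x : ℝ => x ^ 2) =ᵐ[P] fun _ => μ ^ 2 := by
      filter_upwards [heq] with x hx
      have hx' : x - c = 0 := hx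
      have : x = μ := by rw [← h]; linarith
      simp [this]
    have : (∫ x, x ^ 2 ∂P) = μ ^ 2 := by
      rw [integral_congr_ae hx2]; simp
    rw [h2] at this
    nlinarith

lemma sym_center (μ : ℝ) (P : Measure ℝ) [IsProbabilityMeasure P]
    (hid : Integrable (fun x : ℝ => x) P) (hmean : (∫ x, x ∂P) = μ)
    (a₀ : ℝ) (ha : ∀ x : ℝ, P {z | a₀ + x < z} = P {z | z < a₀ - x}) : a₀ = μ := by
  have hT : Measurable (fun z : ℝ => 2 * a₀ - z) := measurable_const.sub measurable_id
  have hmap : Measure.map (fun z : ℝ => 2 * a₀ - z) P = P := by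
    refine Measure.ext_of_Iic _ _ (fun t => ?_)
    have hpre : (fun z : ℝ => 2 * a₀ - z) ⁻¹' Set.Iic t = Set.Ici (2 * a₀ - t) := by
      ext z; simp only [Set.mem_preimage, Set.mem_Iic, Set.mem_Ici]
      constructor <;> intro <;> linarith
    have key : P (Set.Ioi t) = P (Set.Iio (2 * a₀ - t)) := by
      have h1 := ha (t - a₀)
      have e1 : {z : ℝ | a₀ + (t - a₀) < z} = Set.Ioi t := by
        ext z; simp only [Set.mem_setOf_eq, Set.mem_Ioi]; constructor <;> intro <;> linarith
      have e2 : {z : ℝ | z < a₀ - (t - a₀)} = Set.Iio (2 * a₀ - t) := by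
        ext z; simp only [Set.mem_setOf_eq, Set.mem_Iio]; constructor <;> intro <;> linarith
      rwa [e1, e2] at h1
    calc Measure.map (fun z : ℝ => 2 * a₀ - z) P (Set.Iic t)
        = P (Set.Ici (2 * a₀ - t)) := by
          rw [Measure.map_apply hT measurableSet_Iic, hpre]
      _ = P ((Set.Iio (2 * a₀ - t))ᶜ) := by rw [Set.compl_Iio]
      _ = P Set.univ - P (Set.Iio (2 * a₀ - t)) :=
          measure_compl measurableSet_Iio (measure_ne_top _ _)
      _ = P Set.univ - P (Set.Ioi t) := by rw [key]
      _ = P ((Set.Ioi t)ᶜ) :=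
          (measure_compl measurableSet_Ioi (measure_ne_top _ _)).symm
      _ = P (Set.Iic t) := by rw [Set.compl_Ioi]
  have hi : (∫ x, x ∂(Measure.map (fun z : ℝ => 2 * a₀ - z) P))
      = ∫ x, (2 * a₀ - x) ∂P :=
    integral_map hT.aemeasurable measurable_id.aestronglyMeasurable
  rw [hmap, hmean, integral_sub (integrable_const _) hid, hmean] at hi
  simp at hi
  linarith

lemma sym_ae_lower (μ : ℝ) (P : Measure ℝ) [IsProbabilityMeasure P]
    (ha : ∀ x : ℝ, P {z | μ + x < z} = P {z | z < μ - x}) {c : ℝ}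
    (hc : ∀ᵐ x ∂P, x ≤ c) : ∀ᵐ x ∂P, 2 * μ - c ≤ x := by
  have h0 : P {z : ℝ | c < z} = 0 := by
    have := ae_iff.1 hc
    simpa only [not_le] using this
  have h1 := ha (c - μ)
  have e1 : {z : ℝ | μ + (c - μ) < z} = {z : ℝ | c < z} := by
    ext z; simp only [Set.mem_setOf_eq]; constructor <;> intro <;> linarith
  rw [e1] at h1
  rw [ae_iff]
  have e2 : {x : ℝ | ¬ 2 * μ - c ≤ x} = {z : ℝ | z < μ - (c - μ)} := by
    ext z; simp only [Set.mem_setOf_eq, not_le]; constructor <;> intro <;> linarith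
  rw [e2, ← h1]; exact h0

lemma sym_ae_upper (μ : ℝ) (P : Measure ℝ) [IsProbabilityMeasure P]
    (ha : ∀ x : ℝ, P {z | μ + x < z} = P {z | z < μ - x}) {c : ℝ}
    (hc : ∀ᵐ x ∂P, c ≤ x) : ∀ᵐ x ∂P, x ≤ 2 * μ - c := by
  have h0 : P {z : ℝ | z < c} = 0 := by
    have := ae_iff.1 hc
    simpa only [not_le] using this
  have h1 := ha (μ - c)
  have e1 : {z : ℝ | z < μ - (μ - c)} = {z : ℝ | z < c} := by
    ext z; simp only [Set.mem_setOf_eq]; constructor <;> intro <;> linarith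
  rw [e1] at h1
  rw [ae_iff]
  have e2 : {x : ℝ | ¬ x ≤ 2 * μ - c} = {z : ℝ | μ + (μ - c) < z} := by
    ext z; simp only [Set.mem_setOf_eq, not_le]; constructor <;> intro <;> linarith
  rw [e2, h1]; exact h0

lemma two_point_moments (a b p μ σ : ℝ) (hp : 0 ≤ p) (hp1 : p ≤ 1)
    (e1 : p * a + (1 - p) * b = μ) (e2 : p * a ^ 2 + (1 - p) * b ^ 2 = μ ^ 2 + σ ^ 2) :
    (∫ x, x ∂(ENNReal.ofReal p • Measure.dirac a + ENNReal.ofReal (1 - p) • Measure.dirac b)) = μ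
    ∧ (∫ x, x ^ 2 ∂(ENNReal.ofReal p • Measure.dirac a + ENNReal.ofReal (1 - p) • Measure.dirac b))
      = μ ^ 2 + σ ^ 2 := by
  constructor
  · rw [two_point_integral (fun x => x) measurable_id a b p (1 - p) hp (by linarith)]; exact e1
  · rw [two_point_integral (fun x => x ^ 2) (measurable_id.pow_const 2) a b p (1 - p) hp
      (by linarith)]
    exact e2

theorem stmt_5 (μ σ : ℝ) (hσ : 0 < σ) (P : Measure ℝ) [IsProbabilityMeasure P]
    (hint : Integrable (fun x => x ^ 2) P)
    (hmean : (∫ x, x ∂P) = μ) (h2 : (∫ x, x ^ 2 ∂P) = μ ^ 2 + σ ^ 2) :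
    ∃ (a b p : ℝ), 0 ≤ p ∧ p ≤ 1 ∧
      ∀ Q : Measure ℝ,
        Q = ENNReal.ofReal p • Measure.dirac a + ENNReal.ofReal (1 - p) • Measure.dirac b →
        (∫ x, x ∂Q) = μ ∧ (∫ x, x ^ 2 ∂Q) = μ ^ 2 + σ ^ 2 ∧
        (∀ c : ℝ, (∀ᵐ x ∂P, x ≤ c) → a ≤ c ∧ b ≤ c) ∧
        (∀ c : ℝ, (∀ᵐ x ∂P, c ≤ x) → c ≤ a ∧ c ≤ b) ∧
        ((∃ a₀ : ℝ, ∀ x : ℝ, P {z | a₀ + x < z} = P {z | z < a₀ - x}) →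
          ∀ x : ℝ, Q {z | μ + x < z} = Q {z | z < μ - x}) := by
  have hid : Integrable (fun x : ℝ => x) P := integrable_id' P hint
  by_cases hsym : ∃ a₀ : ℝ, ∀ x : ℝ, P {z | a₀ + x < z} = P {z | z < a₀ - x}
  · -- symmetric case
    obtain ⟨a₀, ha⟩ := hsym
    have ha0 : a₀ = μ := sym_center μ P hid hmean a₀ ha
    rw [ha0] at ha
    refine ⟨μ - σ, μ + σ, 1/2, by norm_num, by norm_num, ?_⟩
    intro Q hQ
    subst hQ
    obtain ⟨m1, m2⟩ := two_point_moments (μ - σ) (μ + σ) (1/2) μ σ (by norm_num) (by norm_num)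
      (by ring) (by ring)
    refine ⟨m1, m2, ?_, ?_, ?_⟩
    · intro c hc
      have h1 := mean_lt_of_ae_le μ σ hσ P hint hmean h2 hc
      have hc' := sym_ae_lower μ P ha hc
      have hbd := bhatia_davis μ σ P hint hmean h2 hc hc'
      constructor <;> nlinarith
    · intro c hc
      have h1 := lt_mean_of_ae_le μ σ hσ P hint hmean h2 hc
      have hc' := sym_ae_upper μ P ha hc
      have hbd := bhatia_davis μ σ P hint hmean h2 hc' hc
      constructor <;> nlinarith
    · intro _ x
      have e : ∀ (s : Set ℝ), MeasurableSet s →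
          (ENNReal.ofReal (1/2) • Measure.dirac (μ - σ)
            + ENNReal.ofReal (1 - 1/2) • Measure.dirac (μ + σ)) s
          = ENNReal.ofReal (1/2) * s.indicator 1 (μ - σ)
            + ENNReal.ofReal (1 - 1/2) * s.indicator 1 (μ + σ) := by
        intro s hs
        simp [Measure.add_apply, Measure.smul_apply, Measure.dirac_apply' _ hs, smul_eq_mul]
      rw [show {z : ℝ | μ + x < z} = Set.Ioi (μ + x) from rfl,
        show {z : ℝ | z < μ - x} = Set.Iio (μ - x) from rfl,
        e _ measurableSet_Ioi, e _ measurableSet_Iio]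
      simp only [Set.indicator_apply, Set.mem_Ioi, Set.mem_Iio, Pi.one_apply]
      have c1 : (μ + x < μ - σ) ↔ (μ + σ < μ - x) := by constructor <;> intro <;> linarith
      have c2 : (μ + x < μ + σ) ↔ (μ - σ < μ - x) := by constructor <;> intro <;> linarith
      rw [if_congr c1 rfl rfl, if_congr c2 rfl rfl]
      norm_num
      ring
  · by_cases hU : ∃ c : ℝ, ∀ᵐ x ∂P, x ≤ c
    · -- essential sup exists
      obtain ⟨c₀, hc₀⟩ := hU
      set S := {c : ℝ | ∀ᵐ x ∂P, x ≤ c} with hS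
      have hSne : S.Nonempty := ⟨c₀, hc₀⟩
      have hbdd : BddBelow S :=
        ⟨μ, fun c hc => (mean_lt_of_ae_le μ σ hσ P hint hmean h2 hc).le⟩
      set M := sInf S with hMdef
      have hM : ∀ᵐ x ∂P, x ≤ M := by
        have hn : ∀ n : ℕ, ∀ᵐ x ∂P, x ≤ M + 1/(n+1) := by
          intro n
          have hpos : (0:ℝ) < 1/(n+1) := by positivity
          have hlt : M < M + 1/(n+1) := by linarith
          obtain ⟨c, hcS, hcl⟩ := (csInf_lt_iff hbdd hSne).1 hlt
          have hcS' : ∀ᵐ x ∂P, x ≤ c := hcS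
          exact hcS'.mono fun x hx => hx.trans hcl.le
        filter_upwards [ae_all_iff.2 hn] with x hx
        by_contra hcon
        push_neg at hcon
        obtain ⟨n, hn'⟩ := exists_nat_one_div_lt (sub_pos.2 hcon)
        have := hx n
        linarith
      have hμM := mean_lt_of_ae_le μ σ hσ P hint hmean h2 hM
      set d := M - μ with hd
      have hd0 : 0 < d := sub_pos.2 hμM
      have hD : (0:ℝ) < d^2 + σ^2 := by positivity
      have hM' : M = μ + d := by rw [hd]; ring
      refine ⟨μ - σ^2/d, M, d^2/(d^2+σ^2), by positivity, ?_, ?_⟩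
      · rw [div_le_one hD]; nlinarith
      intro Q hQ
      subst hQ
      obtain ⟨m1, m2⟩ := two_point_moments (μ - σ^2/d) M (d^2/(d^2+σ^2)) μ σ (by positivity)
        (by rw [div_le_one hD]; nlinarith)
        (by rw [hM']; field_simp; ring) (by rw [hM']; field_simp; ring)
      refine ⟨m1, m2, ?_, ?_, fun h => absurd h hsym⟩
      · intro c hc
        have hMc : M ≤ c := csInf_le hbdd hc
        have hpos : (0:ℝ) < σ^2/d := by positivity
        exact ⟨by linarith, hMc⟩
      · intro c hc
        have hcμ := lt_mean_of_ae_le μ σ hσ P hint hmean h2 hc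
        have hbd := bhatia_davis μ σ P hint hmean h2 hM hc
        have hdiv : σ^2/d ≤ μ - c := (div_le_iff₀ hd0).2 (by nlinarith)
        exact ⟨by linarith, by linarith⟩
    · by_cases hL : ∃ c : ℝ, ∀ᵐ x ∂P, c ≤ x
      · -- essential inf exists, no essential sup
        obtain ⟨c₀, hc₀⟩ := hL
        set S := {c : ℝ | ∀ᵐ x ∂P, c ≤ x} with hS
        have hSne : S.Nonempty := ⟨c₀, hc₀⟩
        have hbdd : BddAbove S :=
          ⟨μ, fun c hc => (lt_mean_of_ae_le μ σ hσ P hint hmean h2 hc).le⟩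
        set m := sSup S with hmdef
        have hm : ∀ᵐ x ∂P, m ≤ x := by
          have hn : ∀ n : ℕ, ∀ᵐ x ∂P, m - 1/(n+1) ≤ x := by
            intro n
            have hpos : (0:ℝ) < 1/(n+1) := by positivity
            have hlt : m - 1/(n+1) < m := by linarith
            obtain ⟨c, hcS, hcl⟩ := (lt_csSup_iff hbdd hSne).1 hlt
            have hcS' : ∀ᵐ x ∂P, c ≤ x := hcS
            exact hcS'.mono fun x hx => hcl.le.trans hx
          filter_upwards [ae_all_iff.2 hn] with x hx
          by_contra hcon
          push_neg at hcon
          obtain ⟨n, hn'⟩ := exists_nat_one_div_lt (sub_pos.2 hcon)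
          have := hx n
          linarith
        have hmμ := lt_mean_of_ae_le μ σ hσ P hint hmean h2 hm
        set e := μ - m with he
        have he0 : 0 < e := sub_pos.2 hmμ
        have hE : (0:ℝ) < e^2 + σ^2 := by positivity
        have hm' : m = μ - e := by rw [he]; ring
        refine ⟨m, μ + σ^2/e, σ^2/(e^2+σ^2), by positivity, ?_, ?_⟩
        · rw [div_le_one hE]; nlinarith
        intro Q hQ
        subst hQ
        obtain ⟨m1, m2⟩ := two_point_moments m (μ + σ^2/e) (σ^2/(e^2+σ^2)) μ σ (by positivity)
          (by rw [div_le_one hE]; nlinarith)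
          (by rw [hm']; field_simp; ring) (by rw [hm']; field_simp; ring)
        refine ⟨m1, m2, fun c hc => absurd ⟨c, hc⟩ hU, ?_, fun h => absurd h hsym⟩
        intro c hc
        have hmc : c ≤ m := le_csSup hbdd hc
        have hpos : (0:ℝ) < σ^2/e := by positivity
        have hcμ := lt_mean_of_ae_le μ σ hσ P hint hmean h2 hc
        exact ⟨hmc, by linarith⟩
      · -- no essential bounds at all
        refine ⟨μ - σ, μ + σ, 1/2, by norm_num, by norm_num, ?_⟩
        intro Q hQ
        subst hQ
        obtain ⟨m1, m2⟩ := two_point_moments (μ - σ) (μ + σ) (1/2) μ σ (by norm_num)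
          (by norm_num) (by ring) (by ring)
        exact ⟨m1, m2, fun c hc => absurd ⟨c, hc⟩ hU, fun c hc => absurd ⟨c, hc⟩ hL,
          fun h => absurd h hsym⟩
end

section
/- Let t ∈ ℝ, μ > 0, σ > 0, λ > 0 with λ ≥ (μ−t)₋. The set 𝓛⁺_λ(μ,σ) of distributions of nonnegative random variables with mean μ, variance σ², and E[(X−t)₋] ≤ λ is non-empty if and only if either λ > (μ−t)₋, or λ = (μ−t)₋ and σ² ≤ μ(t−μ). -/
open MeasureTheory

lemma fwd (μ σ t lam : ℝ) (hμ : 0 < μ) (hσ : 0 < σ) (hlam : 0 < lam)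
    (heq : lam = max (t - μ) 0)
    (P : Measure ℝ) (hP : IsProbabilityMeasure P) (hx2 : Integrable (fun x => x ^ 2) P)
    (hneg : P {x | x < 0} = 0) (hm : (∫ x, x ∂P) = μ)
    (hm2 : (∫ x, x ^ 2 ∂P) = μ ^ 2 + σ ^ 2)
    (hpart : (∫ x, max (t - x) 0 ∂P) ≤ lam) : σ ^ 2 ≤ μ * (t - μ) := by
  have htμ : t - μ > 0 := by
    by_contra h
    rw [max_eq_right (by linarith)] at heq; linarith
  have hlamtμ : lam = t - μ := by rw [heq, max_eq_left (by linarith)]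
  -- x is integrable
  have hx : Integrable (fun x : ℝ => x) P := by
    refine Integrable.mono' ((integrable_const (1:ℝ)).add hx2) measurable_id.aestronglyMeasurable
      (Filter.Eventually.of_forall fun x => ?_)
    simp only [Real.norm_eq_abs, Pi.add_apply]
    nlinarith [abs_nonneg x, sq_abs x]
  have hmaxint : Integrable (fun x : ℝ => max (t - x) 0) P := by
    refine Integrable.mono' ((integrable_const |t|).add hx.abs)
      ((measurable_const.sub measurable_id).max measurable_const).aestronglyMeasurable
      (Filter.Eventually.of_forall fun x => ?_)
    simp only [Real.norm_eq_abs, Pi.add_apply]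
    rw [abs_of_nonneg (le_max_right _ _)]
    cases le_total (t - x) 0 with
    | inl h => simp [max_eq_right h]; positivity
    | inr h => rw [max_eq_left h]; have := abs_nonneg t; have := neg_abs_le x; linarith [le_abs_self t]
  -- ∫ (max (t-x) 0 - (t-x)) = 0, nonneg integrand
  have hsubint : Integrable (fun x : ℝ => t - x) P := (integrable_const t).sub hx
  have hg : Integrable (fun x : ℝ => max (t - x) 0 - (t - x)) P := hmaxint.sub hsubint
  have hsub : (∫ x, (t - x) ∂P) = t - μ := by
    rw [integral_sub (integrable_const t) hx, integral_const, hm]; simp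
  have hzero : (∫ x, (max (t - x) 0 - (t - x)) ∂P) = 0 := by
    have h1 : (∫ x, (max (t - x) 0 - (t - x)) ∂P) ≤ 0 := by
      rw [integral_sub hmaxint hsubint, hsub]; linarith
    have h2 : 0 ≤ (∫ x, (max (t - x) 0 - (t - x)) ∂P) :=
      integral_nonneg fun x => by simp [le_max_left]
    linarith
  have hae : ∀ᵐ x ∂P, max (t - x) 0 - (t - x) = 0 := by
    have := (integral_eq_zero_iff_of_nonneg (fun x => by simp [le_max_left] : 
      0 ≤ fun x : ℝ => max (t - x) 0 - (t - x)) hg).1 hzero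
    filter_upwards [this] with x hx using hx
  have haele : ∀ᵐ x ∂P, x ≤ t := by
    filter_upwards [hae] with x hx
    by_contra h
    push_neg at h
    rw [max_eq_right (by linarith)] at hx; linarith
  have haenn : ∀ᵐ x ∂P, 0 ≤ x := by
    rw [ae_iff]; simpa [not_le] using hneg
  have hkey : (∫ x, x ^ 2 ∂P) ≤ ∫ x, t * x ∂P := by
    refine integral_mono_ae hx2 (hx.const_mul t) ?_
    filter_upwards [haele, haenn] with x h1 h2
    nlinarith
  rw [hm2, integral_const_mul, hm] at hkey
  nlinarith


lemma twoPoint_s7 (a b w : ℝ) (hw0 : 0 ≤ w) (hw1 : w ≤ 1) (ha : 0 ≤ a) (hb : 0 ≤ b) :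
    ∃ P : Measure ℝ, IsProbabilityMeasure P ∧ P {x | x < 0} = 0 ∧
      ∀ f : ℝ → ℝ, Measurable f →
        Integrable f P ∧ (∫ x, f x ∂P) = w * f a + (1 - w) * f b := by
  refine ⟨ENNReal.ofReal w • Measure.dirac a + ENNReal.ofReal (1 - w) • Measure.dirac b,
    ⟨?_⟩, ?_, fun f hf => ⟨?_, ?_⟩⟩
  · simp [← ENNReal.ofReal_add hw0 (by linarith : (0:ℝ) ≤ 1 - w)]
  · have hs : MeasurableSet {x : ℝ | x < 0} := measurableSet_lt measurable_id measurable_const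
    simp [Measure.dirac_apply' _ hs, Set.indicator, not_lt.2 ha, not_lt.2 hb]
  · exact Integrable.add_measure
      (((integrable_dirac' hf a).smul_measure ENNReal.ofReal_ne_top))
      (((integrable_dirac' hf b).smul_measure ENNReal.ofReal_ne_top))
  · rw [integral_add_measure
      (((integrable_dirac' hf a).smul_measure ENNReal.ofReal_ne_top))
      (((integrable_dirac' hf b).smul_measure ENNReal.ofReal_ne_top)),
      integral_smul_measure, integral_smul_measure, integral_dirac, integral_dirac,
      ENNReal.toReal_ofReal hw0, ENNReal.toReal_ofReal (by linarith : (0:ℝ) ≤ 1 - w)]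
    simp [smul_eq_mul]

lemma bwd (μ σ t lam : ℝ) (hμ : 0 < μ) (hσ : 0 < σ) (hlam : 0 < lam)
    (h : max (t - μ) 0 < lam ∨ (lam = max (t - μ) 0 ∧ σ ^ 2 ≤ μ * (t - μ))) :
    ∃ P : Measure ℝ, IsProbabilityMeasure P ∧ Integrable (fun x => x ^ 2) P ∧
        P {x | x < 0} = 0 ∧
        (∫ x, x ∂P) = μ ∧ (∫ x, x ^ 2 ∂P) = μ ^ 2 + σ ^ 2 ∧
        (∫ x, max (t - x) 0 ∂P) ≤ lam := by
  have hmid : Measurable (fun x : ℝ => x) := measurable_id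
  have hmsq : Measurable (fun x : ℝ => x ^ 2) := measurable_id.pow_const 2
  have hmmax : Measurable (fun x : ℝ => max (t - x) 0) :=
    (measurable_const.sub measurable_id).max measurable_const
  rcases h with h | ⟨heq, hvar⟩
  · -- lam > max: two points a = μ - ε, b = μ + σ²/ε, w = σ²/(σ²+ε²)
    set m := max (t - μ) 0 with hm
    have hm0 : 0 ≤ m := le_max_right _ _
    set ε : ℝ := (min μ (min (lam - m) (σ ^ 2 / (|t - μ| + 1)))) / 2 with hε
    have hε0 : 0 < ε := by
      have h1 : 0 < σ ^ 2 / (|t - μ| + 1) := by positivity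
      have : 0 < lam - m := by linarith
      simp only [hε]
      positivity
    have hεμ : ε < μ := by
      have : ε ≤ μ / 2 := by
        simp only [hε]; gcongr; exact min_le_left _ _
      linarith
    have hεlam : ε ≤ (lam - m) / 2 := by
      simp only [hε]; gcongr
      exact le_trans (min_le_right _ _) (min_le_left _ _)
    have hεb : ε ≤ σ ^ 2 / (|t - μ| + 1) / 2 := by
      simp only [hε]; gcongr
      exact le_trans (min_le_right _ _) (min_le_right _ _)
    set a : ℝ := μ - ε with ha
    set b : ℝ := μ + σ ^ 2 / ε with hb
    set w : ℝ := σ ^ 2 / (σ ^ 2 + ε ^ 2) with hw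
    have hden : 0 < σ ^ 2 + ε ^ 2 := by positivity
    have hw0 : 0 ≤ w := by positivity
    have hw1 : w ≤ 1 := by
      rw [hw, div_le_one hden]; nlinarith
    have hbt : t ≤ b := by
      rcases le_total t μ with h' | h'
      · have : 0 < σ ^ 2 / ε := by positivity
        simp only [hb]; linarith
      · have hpos : (0:ℝ) < t - μ + 1 := by linarith
        have habs : |t - μ| = t - μ := abs_of_nonneg (by linarith)
        rw [habs] at hεb
        have h1 : ε * (t - μ) ≤ σ ^ 2 := by
          have h2 : ε * (t - μ + 1) ≤ σ ^ 2 / (t - μ + 1) / 2 * (t - μ + 1) := by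
            gcongr
          have h3 : σ ^ 2 / (t - μ + 1) / 2 * (t - μ + 1) = σ ^ 2 / 2 := by
            field_simp [hpos.ne']
          have h4 : ε * (t - μ + 1) ≤ σ ^ 2 / 2 := h3 ▸ h2
          have h5 : ε * (t - μ + 1) = ε * (t - μ) + ε := by ring
          linarith [sq_nonneg σ, hε0]
        rw [hb, ← sub_le_iff_le_add', le_div_iff₀ hε0]
        linarith [mul_comm ε (t - μ)]
    obtain ⟨P, hP, hPneg, hint⟩ := twoPoint_s7 a b w hw0 hw1 (by rw [ha]; linarith) (by rw [hb]; positivity)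
    obtain ⟨hi1, he1⟩ := hint _ hmid
    obtain ⟨hi2, he2⟩ := hint _ hmsq
    obtain ⟨hi3, he3⟩ := hint _ hmmax
    refine ⟨P, hP, hi2, hPneg, ?_, ?_, ?_⟩
    · rw [he1, ha, hb, hw]; field_simp; ring
    · rw [he2, ha, hb, hw]; field_simp; ring
    · rw [he3]
      have h1 : max (t - b) 0 = 0 := max_eq_right (by linarith)
      rw [h1, mul_zero, add_zero]
      have h2 : max (t - a) 0 ≤ m + ε := by
        rcases le_total (t - a) 0 with h' | h'
        · rw [max_eq_right h']; linarith [hε0.le, hm0]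
        · rw [max_eq_left h', ha]
          have : t - μ ≤ m := le_max_left _ _
          linarith
      calc w * max (t - a) 0 ≤ 1 * (m + ε) := by
            apply mul_le_mul hw1 h2 (le_max_right _ _) zero_le_one
        _ = m + ε := one_mul _
        _ ≤ lam := by linarith
  · -- lam = max, σ² ≤ μ(t-μ): points s = (μ²+σ²)/μ and 0, weight p = μ²/(μ²+σ²)
    have htμ : 0 < t - μ := by
      rcases le_or_gt (t - μ) 0 with h' | h'
      · rw [max_eq_right h'] at heq; linarith
      · exact h'
    have hlameq : lam = t - μ := by rw [heq, max_eq_left htμ.le]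
    set s : ℝ := (μ ^ 2 + σ ^ 2) / μ with hs
    set p : ℝ := μ ^ 2 / (μ ^ 2 + σ ^ 2) with hp
    have hden : 0 < μ ^ 2 + σ ^ 2 := by positivity
    have hp0 : 0 ≤ p := by positivity
    have hp1 : p ≤ 1 := by rw [hp, div_le_one hden]; nlinarith
    have hs0 : 0 ≤ s := by positivity
    have hst : s ≤ t := by
      rw [hs, div_le_iff₀ hμ]; nlinarith
    obtain ⟨P, hP, hPneg, hint⟩ := twoPoint_s7 s 0 p hp0 hp1 hs0 le_rfl
    obtain ⟨hi1, he1⟩ := hint _ hmid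
    obtain ⟨hi2, he2⟩ := hint _ hmsq
    obtain ⟨hi3, he3⟩ := hint _ hmmax
    refine ⟨P, hP, hi2, hPneg, ?_, ?_, ?_⟩
    · rw [he1, hs, hp]; field_simp; ring
    · rw [he2, hs, hp]; field_simp; ring
    · rw [he3]
      have h1 : max (t - s) 0 = t - s := max_eq_left (by linarith)
      have h2 : max (t - 0) 0 = t := by rw [sub_zero, max_eq_left (by linarith)]
      rw [h1, h2, hlameq]
      have hps : p * s = μ := by rw [hp, hs]; field_simp
      have hexp : p * (t - s) + (1 - p) * t = t - p * s := by ring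
      rw [hexp, hps]

theorem stmt_7 (μ σ t lam : ℝ) (hμ : 0 < μ) (hσ : 0 < σ) (hlam : 0 < lam)
    (hlam' : max (t - μ) 0 ≤ lam) :
    (∃ P : Measure ℝ, IsProbabilityMeasure P ∧ Integrable (fun x => x ^ 2) P ∧
        P {x | x < 0} = 0 ∧
        (∫ x, x ∂P) = μ ∧ (∫ x, x ^ 2 ∂P) = μ ^ 2 + σ ^ 2 ∧
        (∫ x, max (t - x) 0 ∂P) ≤ lam)
      ↔ (max (t - μ) 0 < lam ∨ (lam = max (t - μ) 0 ∧ σ ^ 2 ≤ μ * (t - μ))) := by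
  constructor
  · rintro ⟨P, hP, hx2, hneg, hm, hm2, hpart⟩
    rcases lt_or_eq_of_le hlam' with h | h
    · exact Or.inl h
    · exact Or.inr ⟨h.symm, fwd μ σ t lam hμ hσ hlam h.symm P hP hx2 hneg hm hm2 hpart⟩
  · exact bwd μ σ t lam hμ hσ hlam
end

section
/- Let t ∈ ℝ, μ > 0, σ > 0, λ > (μ−t)₋, and set m = λ − μ + t (so m > 0). If σ ≤ m, then the supremum of E[(X−t)₊²] over symmetric distributions with mean μ, variance σ², and E[(X−t)₋] ≤ λ equals: σ² + (t−μ)² if μ − m ≤ t ≤ μ − σ; (1/2)(μ − t + σ)² if μ − σ < t ≤ μ; and σ²/2 if t > μ. -/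
open MeasureTheory

/-- Values of the target semi-variance `E[((X-t)₊)²]` over symmetric distributions with
mean `μ`, variance `σ²` and expected excess profit `E[(X-t)₋] ≤ lam`. -/
def symTSVSetLam (μ σ t lam : ℝ) : Set ℝ :=
  {y : ℝ | ∃ P : Measure ℝ, IsProbabilityMeasure P ∧ Integrable (fun x => x ^ 2) P ∧
    (∃ a : ℝ, ∀ x : ℝ, P {z | a + x < z} = P {z | z < a - x}) ∧
    (∫ x, x ∂P) = μ ∧ (∫ x, x ^ 2 ∂P) = μ ^ 2 + σ ^ 2 ∧
    (∫ x, max (t - x) 0 ∂P) ≤ lam ∧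
    y = ∫ x, (max (x - t) 0) ^ 2 ∂P}

/-!
An admissible law is symmetric about some `a`, and comparing means forces `a = μ`; hence `X` and
`2μ - X` have the same law and `2 E[(X-t)₊²] = E[(X-t)₊² + (2μ-X-t)₊²]`. Bounding this
integrand pointwise by a quadratic `k (X-μ)² + c` in each regime gives the upper bounds
`σ² + (t-μ)²`, `(μ-t+σ)²/2` and `σ²/2`. The first two are attained by the two-point law `μ ± σ`.
For `t > μ` the last one is only approached: put mass `σ²/(2s²)` at `μ ± s` and the rest at `μ`.
As `s → ∞` the lower atom adds at most `σ²/(2s)` to `E[(X-t)₋]`, while the upper one contributes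
`σ²(1 - (t-μ)/s)²/2 → σ²/2` to the target semivariance.
-/

open ProbabilityTheory Set Filter Topology

section SymmetricLaw

variable {P : Measure ℝ}

lemma two_mul_integral_le_of_map_reflect_eq_self {a : ℝ} (hmap : P.map (fun x => 2 * a - x) = P)
    {f g : ℝ → ℝ} (hf : Integrable f P) (hg : Integrable g P)
    (hfg : ∀ x, f x + f (2 * a - x) ≤ g x) :
    2 * ∫ x, f x ∂P ≤ ∫ x, g x ∂P := by
  have hmeas : AEMeasurable (fun x : ℝ => 2 * a - x) P := by fun_prop
  have hfm : AEStronglyMeasurable f (P.map fun x => 2 * a - x) := by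
    rw [hmap]; exact hf.aestronglyMeasurable
  have hrefl : ∫ x, f (2 * a - x) ∂P = ∫ x, f x ∂P := by
    rw [← integral_map hmeas hfm, hmap]
  have hf' : Integrable (fun x => f (2 * a - x)) P :=
    (integrable_map_measure hfm hmeas).mp (by rwa [hmap])
  calc 2 * ∫ x, f x ∂P = ∫ x, (f x + f (2 * a - x)) ∂P := by
        rw [integral_add hf hf', hrefl]; ring
    _ ≤ ∫ x, g x ∂P := integral_mono (hf.add hf') hg hfg

variable [IsProbabilityMeasure P]

lemma integral_sub_sq_eq_of_moments {μ σ : ℝ} (hP2 : Integrable (fun x => x ^ 2) P)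
    (hmean : ∫ x, x ∂P = μ) (hmom : ∫ x, x ^ 2 ∂P = μ ^ 2 + σ ^ 2) :
    ∫ x, (x - μ) ^ 2 ∂P = σ ^ 2 := by
  have hL2 : MemLp id 2 P := (memLp_two_iff_integrable_sq aestronglyMeasurable_id).2 hP2
  have hvar := variance_eq_sub hL2
  rw [variance_eq_integral aemeasurable_id] at hvar
  simp only [id, Pi.pow_apply, hmean, hmom] at hvar
  linarith

lemma map_reflect_eq_self {a : ℝ} (hsymm : ∀ x, P {z | a + x < z} = P {z | z < a - x}) :
    P.map (fun x => 2 * a - x) = P := by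
  have hmeas : Measurable fun x : ℝ => 2 * a - x := by fun_prop
  have := Measure.isProbabilityMeasure_map (μ := P) hmeas.aemeasurable
  refine Measure.ext_of_Iic _ _ fun c => ?_
  have hpre : (fun x : ℝ => 2 * a - x) ⁻¹' Iic c = (Iio (2 * a - c))ᶜ := by
    ext x; simp only [mem_preimage, mem_Iic, mem_compl_iff, mem_Iio, not_lt]
    constructor <;> intro <;> linarith
  have hIoi : P (Ioi c) = P (Iio (2 * a - c)) := by
    convert hsymm (c - a) using 2 <;> ext z <;> simp only [mem_Ioi, mem_Iio, mem_ofPred_eq] <;>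
      constructor <;> intro <;> linarith
  rw [Measure.map_apply hmeas measurableSet_Iic, hpre, prob_compl_eq_one_sub measurableSet_Iio,
    ← hIoi, ← prob_compl_eq_one_sub measurableSet_Ioi, compl_Ioi]

lemma eq_integral_of_map_reflect_eq_self {a : ℝ} (hP1 : Integrable (fun x => x) P)
    (hmap : P.map (fun x => 2 * a - x) = P) : a = ∫ x, x ∂P := by
  have h := integral_map (μ := P) (φ := fun x : ℝ => 2 * a - x) (by fun_prop)
    (f := fun x : ℝ => x) aestronglyMeasurable_id
  rw [hmap, integral_sub (integrable_const _) hP1, integral_const, probReal_univ] at h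
  simp only [smul_eq_mul, one_mul] at h
  linarith

end SymmetricLaw

lemma sq_max_zero_le_sq (x : ℝ) : max x 0 ^ 2 ≤ x ^ 2 := by
  rcases le_or_gt x 0 with h | h
  · rw [max_eq_right h]; simpa using sq_nonneg x
  · rw [max_eq_left h.le]

lemma sq_max_add_sq_max_sub_le (u d : ℝ) :
    max (u + d) 0 ^ 2 + max (d - u) 0 ^ 2 ≤ 2 * u ^ 2 + 2 * d ^ 2 := by
  nlinarith [sq_max_zero_le_sq (u + d), sq_max_zero_le_sq (d - u)]

lemma sq_max_add_sq_max_sub_le_of_nonpos {u d : ℝ} (hd : d ≤ 0) :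
    max (u + d) 0 ^ 2 + max (d - u) 0 ^ 2 ≤ u ^ 2 := by
  rcases le_or_gt (u + d) 0 with h₁ | h₁ <;> rcases le_or_gt (d - u) 0 with h₂ | h₂
  · rw [max_eq_right h₁, max_eq_right h₂]; simpa using sq_nonneg u
  · rw [max_eq_right h₁, max_eq_left h₂.le]; nlinarith
  · rw [max_eq_left h₁.le, max_eq_right h₂]; nlinarith
  · linarith

lemma sq_max_add_sq_max_sub_le_of_le {u d s : ℝ} (hs : 0 < s) (hd : 0 ≤ d) (hds : d ≤ s) :
    max (u + d) 0 ^ 2 + max (d - u) 0 ^ 2 ≤ (s + d) / s * u ^ 2 + d * (d + s) := by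
  rw [div_mul_eq_mul_div, ← sub_le_iff_le_add, le_div_iff₀ hs]
  rcases le_or_gt (u + d) 0 with h₁ | h₁ <;> rcases le_or_gt (d - u) 0 with h₂ | h₂
  · rw [max_eq_right h₁, max_eq_right h₂]
    nlinarith [mul_nonneg (by linarith : 0 ≤ s + d) (sq_nonneg u), mul_nonneg hd hs.le]
  · rw [max_eq_right h₁, max_eq_left h₂.le]; nlinarith [mul_nonneg hd (sq_nonneg (u + s))]
  · rw [max_eq_left h₁.le, max_eq_right h₂]; nlinarith [mul_nonneg hd (sq_nonneg (u - s))]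
  · rw [max_eq_left h₁.le, max_eq_left h₂.le]
    nlinarith [mul_nonneg (sub_nonneg.2 hds) (sub_nonneg.2 (by nlinarith : u ^ 2 ≤ d * s))]

lemma two_mul_le_of_mem_symTSVSetLam {μ σ t lam y k c : ℝ} (hy : y ∈ symTSVSetLam μ σ t lam)
    (hbound : ∀ u, max (u + (μ - t)) 0 ^ 2 + max (μ - t - u) 0 ^ 2 ≤ k * u ^ 2 + c) :
    2 * y ≤ k * σ ^ 2 + c := by
  obtain ⟨P, hP, hP2, ⟨a, hsymm⟩, hmean, hmom, -, rfl⟩ := hy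
  have hL2 : MemLp id 2 P := (memLp_two_iff_integrable_sq aestronglyMeasurable_id).2 hP2
  have hmap := map_reflect_eq_self hsymm
  obtain rfl : a = μ := hmean ▸ eq_integral_of_map_reflect_eq_self (hL2.integrable one_le_two) hmap
  have hf : Integrable (fun x => max (x - t) 0 ^ 2) P :=
    (hL2.sub (memLp_const t)).pos_part.integrable_sq
  have hsq : Integrable (fun x => k * (x - a) ^ 2) P :=
    (hL2.sub (memLp_const a)).integrable_sq.const_mul k
  have hg : Integrable (fun x => k * (x - a) ^ 2 + c) P := hsq.add (integrable_const c)
  calc 2 * ∫ x, max (x - t) 0 ^ 2 ∂P ≤ ∫ x, (k * (x - a) ^ 2 + c) ∂P :=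
        two_mul_integral_le_of_map_reflect_eq_self hmap hf hg fun x => by
          convert hbound (x - a) using 4 <;> ring
    _ = k * σ ^ 2 + c := by
        rw [integral_add hsq (integrable_const c),
          integral_const_mul, integral_sub_sq_eq_of_moments hP2 hmean hmom]
        simp

section ThreePoint

noncomputable def symmThreePoint (a s p : ℝ) : Measure ℝ :=
  ENNReal.ofReal p • (Measure.dirac (a - s) + Measure.dirac (a + s)) +
    ENNReal.ofReal (1 - 2 * p) • Measure.dirac a

variable {a s p : ℝ}

lemma isProbabilityMeasure_symmThreePoint (hp0 : 0 ≤ p) (hp1 : 2 * p ≤ 1) :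
    IsProbabilityMeasure (symmThreePoint a s p) := by
  constructor
  simp only [symmThreePoint, Measure.add_apply, Measure.smul_apply, measure_univ, smul_eq_mul,
    mul_add, mul_one]
  rw [← ENNReal.ofReal_add hp0 hp0, ← ENNReal.ofReal_add (by linarith) (by linarith),
    show p + p + (1 - 2 * p) = 1 by ring, ENNReal.ofReal_one]

lemma integrable_symmThreePoint (f : ℝ → ℝ) : Integrable f (symmThreePoint a s p) := by
  have hdirac : ∀ b, Integrable f (Measure.dirac b) := fun b => integrable_dirac enorm_lt_top
  exact (((hdirac _).add_measure (hdirac _)).smul_measure ENNReal.ofReal_ne_top).add_measure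
    ((hdirac _).smul_measure ENNReal.ofReal_ne_top)

lemma integral_symmThreePoint (hp0 : 0 ≤ p) (hp1 : 2 * p ≤ 1) (f : ℝ → ℝ) :
    ∫ x, f x ∂symmThreePoint a s p = p * (f (a - s) + f (a + s)) + (1 - 2 * p) * f a := by
  have hdirac : ∀ b, Integrable f (Measure.dirac b) := fun b => integrable_dirac enorm_lt_top
  rw [symmThreePoint, integral_add_measure, integral_smul_measure, integral_smul_measure,
    integral_add_measure (hdirac _) (hdirac _), integral_dirac, integral_dirac, integral_dirac,
    ENNReal.toReal_ofReal hp0, ENNReal.toReal_ofReal (by linarith), smul_eq_mul, smul_eq_mul]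
  · exact ((hdirac _).add_measure (hdirac _)).smul_measure ENNReal.ofReal_ne_top
  · exact (hdirac _).smul_measure ENNReal.ofReal_ne_top

lemma symmThreePoint_symm (x : ℝ) :
    symmThreePoint a s p {z | a + x < z} = symmThreePoint a s p {z | z < a - x} := by
  have e₁ : a + x < a - s ↔ a + s < a - x := by constructor <;> intro <;> linarith
  have e₂ : a + x < a + s ↔ a - s < a - x := by constructor <;> intro <;> linarith
  have e₃ : a + x < a ↔ a < a - x := by constructor <;> intro <;> linarith
  simp only [symmThreePoint, Measure.add_apply, Measure.smul_apply, Measure.dirac_apply,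
    indicator_apply, mem_ofPred_eq, e₁, e₂, e₃, smul_eq_mul, Pi.one_apply]
  ring

end ThreePoint

lemma symmThreePoint_mem_symTSVSetLam {μ σ t lam s p : ℝ} (hp0 : 0 ≤ p) (hp1 : 2 * p ≤ 1)
    (hps : 2 * p * s ^ 2 = σ ^ 2)
    (hlam : p * (max (t - (μ - s)) 0 + max (t - (μ + s)) 0) + (1 - 2 * p) * max (t - μ) 0 ≤ lam) :
    p * (max (μ - s - t) 0 ^ 2 + max (μ + s - t) 0 ^ 2) + (1 - 2 * p) * max (μ - t) 0 ^ 2 ∈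
      symTSVSetLam μ σ t lam := by
  have := isProbabilityMeasure_symmThreePoint (a := μ) (s := s) hp0 hp1
  refine ⟨symmThreePoint μ s p, this, integrable_symmThreePoint _, ⟨μ, symmThreePoint_symm⟩,
    ?_, ?_, ?_, ?_⟩ <;> rw [integral_symmThreePoint hp0 hp1]
  · ring
  · linear_combination hps
  · exact hlam

lemma sq_add_sq_mem_symTSVSetLam {μ σ t lam : ℝ} (hσ : 0 ≤ σ) (ht : t ≤ μ - σ) (hlam : 0 ≤ lam) :
    σ ^ 2 + (t - μ) ^ 2 ∈ symTSVSetLam μ σ t lam := by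
  have h := symmThreePoint_mem_symTSVSetLam (μ := μ) (σ := σ) (t := t) (lam := lam) (s := σ)
    (p := 1 / 2) (by norm_num) (by norm_num) (by ring)
  rw [max_eq_right (by linarith : t - (μ - σ) ≤ 0), max_eq_right (by linarith : t - (μ + σ) ≤ 0),
    max_eq_right (by linarith : t - μ ≤ 0), max_eq_left (by linarith : 0 ≤ μ - σ - t),
    max_eq_left (by linarith : 0 ≤ μ + σ - t)] at h
  convert h (by linarith) using 1
  ring

lemma add_sq_div_two_mem_symTSVSetLam {μ σ t lam : ℝ} (ht₁ : μ - σ ≤ t) (ht₂ : t ≤ μ)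
    (hlam : (t - (μ - σ)) / 2 ≤ lam) :
    (μ - t + σ) ^ 2 / 2 ∈ symTSVSetLam μ σ t lam := by
  have h := symmThreePoint_mem_symTSVSetLam (μ := μ) (σ := σ) (t := t) (lam := lam) (s := σ)
    (p := 1 / 2) (by norm_num) (by norm_num) (by ring)
  rw [max_eq_left (by linarith : 0 ≤ t - (μ - σ)), max_eq_right (by linarith : t - (μ + σ) ≤ 0),
    max_eq_right (by linarith : μ - σ - t ≤ 0), max_eq_left (by linarith : 0 ≤ μ + σ - t)] at h
  convert h (by linarith) using 1
  ring

lemma sq_mul_one_sub_div_sq_mem_symTSVSetLam {μ σ t lam s : ℝ} (hσ : 0 < σ) (ht : μ < t)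
    (hsσ : σ ≤ s) (hst : t - μ ≤ s) (hslam : σ ^ 2 / s ≤ lam - (t - μ)) :
    σ ^ 2 / 2 * (1 - (t - μ) / s) ^ 2 ∈ symTSVSetLam μ σ t lam := by
  have hs : 0 < s := hσ.trans_le hsσ
  set p := σ ^ 2 / (2 * s ^ 2) with hp
  have hp0 : 0 ≤ p := by positivity
  have hp1 : 2 * p ≤ 1 := by
    rw [hp, mul_div_assoc', div_le_one (by positivity)]; nlinarith
  have hps : 2 * p * s ^ 2 = σ ^ 2 := by rw [hp]; field_simp
  have hps_le : p * (s - (t - μ)) ≤ σ ^ 2 / s := by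
    rw [hp, div_mul_eq_mul_div, div_le_div_iff₀ (by positivity) hs]
    nlinarith [mul_nonneg (mul_nonneg (sq_nonneg σ) hs.le) (by linarith : 0 ≤ s + (t - μ))]
  have h := symmThreePoint_mem_symTSVSetLam (μ := μ) (t := t) (lam := lam) hp0 hp1 hps
  rw [max_eq_left (by linarith : 0 ≤ t - (μ - s)), max_eq_right (by linarith : t - (μ + s) ≤ 0),
    max_eq_left (by linarith : 0 ≤ t - μ), max_eq_right (by linarith : μ - s - t ≤ 0),
    max_eq_left (by linarith : 0 ≤ μ + s - t), max_eq_right (by linarith : μ - t ≤ 0)] at h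
  convert h (by linarith) using 1
  rw [hp]; field_simp; ring

lemma exists_gt_mem_symTSVSetLam {μ σ t lam w : ℝ} (hσ : 0 < σ) (ht : μ < t) (hlam : t - μ < lam)
    (hw : w < σ ^ 2 / 2) : ∃ y ∈ symTSVSetLam μ σ t lam, w < y := by
  have hlim : Tendsto (fun s => σ ^ 2 / 2 * (1 - (t - μ) / s) ^ 2) atTop (𝓝 (σ ^ 2 / 2)) := by
    have h : Tendsto (fun s => (t - μ) / s) atTop (𝓝 0) := tendsto_const_nhds.div_atTop tendsto_id
    simpa using (((tendsto_const_nhds (x := (1 : ℝ))).sub h).pow 2).const_mul (σ ^ 2 / 2)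
  have hmem : ∀ᶠ s in atTop, σ ^ 2 / 2 * (1 - (t - μ) / s) ^ 2 ∈ symTSVSetLam μ σ t lam := by
    filter_upwards [eventually_ge_atTop σ, eventually_ge_atTop (t - μ),
      eventually_ge_atTop (σ ^ 2 / (lam - (t - μ)))] with s hsσ hst hslam
    refine sq_mul_one_sub_div_sq_mem_symTSVSetLam hσ ht hsσ hst ?_
    rwa [div_le_iff₀ (hσ.trans_le hsσ), mul_comm, ← div_le_iff₀ (by linarith)]
  obtain ⟨s, hs, hws⟩ := (hmem.and (hlim.eventually (lt_mem_nhds hw))).exists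
  exact ⟨_, hs, hws⟩

theorem stmt_10_general (μ σ t lam m : ℝ) (hσ : 0 < σ)
    (hlam : max (t - μ) 0 < lam) (hm : m = lam - μ + t) (hσm : σ ≤ m) :
    0 < m ∧
    (μ - m ≤ t → t ≤ μ - σ → sSup (symTSVSetLam μ σ t lam) = σ ^ 2 + (t - μ) ^ 2) ∧
    (μ - σ < t → t ≤ μ → sSup (symTSVSetLam μ σ t lam) = (μ - t + σ) ^ 2 / 2) ∧
    (μ < t → sSup (symTSVSetLam μ σ t lam) = σ ^ 2 / 2) := by
  have hlam₀ : 0 < lam := (le_max_right _ _).trans_lt hlam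
  refine ⟨hσ.trans_le hσm, fun _ ht => ?_, fun ht₁ ht₂ => ?_, fun ht => ?_⟩
  · refine IsGreatest.csSup_eq ⟨sq_add_sq_mem_symTSVSetLam hσ.le ht hlam₀.le, fun y hy => ?_⟩
    linarith [two_mul_le_of_mem_symTSVSetLam hy (sq_max_add_sq_max_sub_le · _)]
  · refine IsGreatest.csSup_eq ⟨add_sq_div_two_mem_symTSVSetLam ht₁.le ht₂ (by linarith),
      fun y hy => ?_⟩
    have h := two_mul_le_of_mem_symTSVSetLam hy
      fun u => sq_max_add_sq_max_sub_le_of_le hσ (sub_nonneg.2 ht₂) (by linarith)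
    have hsq : (σ + (μ - t)) / σ * σ ^ 2 + (μ - t) * (μ - t + σ) = (μ - t + σ) ^ 2 := by
      field_simp; ring
    linarith
  · have hlam' : t - μ < lam := by rwa [max_eq_left (by linarith)] at hlam
    obtain ⟨y₀, hy₀, -⟩ := exists_gt_mem_symTSVSetLam hσ ht hlam' (by positivity : 0 < σ ^ 2 / 2)
    refine csSup_eq_of_forall_le_of_forall_lt_exists_gt ⟨y₀, hy₀⟩ (fun y hy => ?_)
      fun w hw => exists_gt_mem_symTSVSetLam hσ ht hlam' hw
    have h := two_mul_le_of_mem_symTSVSetLam hy (k := 1) (c := 0)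
      fun u => by simpa using sq_max_add_sq_max_sub_le_of_nonpos (u := u) (by linarith : μ - t ≤ 0)
    linarith

theorem stmt_10 (μ σ t lam m : ℝ) (hμ : 0 < μ) (hσ : 0 < σ)
    (hlam : max (t - μ) 0 < lam) (hm : m = lam - μ + t) (hσm : σ ≤ m) :
    0 < m ∧
    (μ - m ≤ t → t ≤ μ - σ → sSup (symTSVSetLam μ σ t lam) = σ ^ 2 + (t - μ) ^ 2) ∧
    (μ - σ < t → t ≤ μ → sSup (symTSVSetLam μ σ t lam) = (μ - t + σ) ^ 2 / 2) ∧
    (μ < t → sSup (symTSVSetLam μ σ t lam) = σ ^ 2 / 2) :=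
  stmt_10_general μ σ t lam m hσ hlam hm hσm
end

section
/- Let Σ be a d×d positive definite matrix, μ ∈ ℝ^d, and w ∈ ℝ^d with w ≠ 0. Then the set of one-dimensional distributions of wᵀX, as the joint distribution of X ranges over all symmetric d-dimensional distributions with mean vector μ and covariance matrix Σ, equals exactly the set of all symmetric one-dimensional distributions with mean wᵀμ and variance wᵀΣw. -/
/-!
If `X` is symmetric about `a` with mean `μ` and covariance `C`, then `wᵀX` is symmetric about
`wᵀa`, and by linearity its mean and variance are `wᵀμ` and `wᵀCw`. Conversely, let `Y` be
symmetric with mean `m = wᵀμ` and variance `c = wᵀCw > 0`, and put `v = Cw / c`. Factoring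
`C = Bᵀ B`, the matrix `U = B (1 - w vᵀ)` satisfies `U w = 0` and `Uᵀ U = C - c v vᵀ`. Take
`X = Z + (Y - m) v + μ` with `Z` independent of `Y` and uniform on the points `± √d U_k`, which
have mean `0` and second moment matrix `Uᵀ U`: then `X` is symmetric about `μ` with mean `μ`
and covariance `Uᵀ U + c v vᵀ = C`, and `wᵀX = Y`. Taking `Z` discrete rather than Gaussian
makes the law of `X` a finite mixture of images of the law of `Y`.
-/

open MeasureTheory
open scoped ENNReal Matrix

lemma MeasureTheory.Measure.map_finsetSum {α β ι : Type*} [MeasurableSpace α]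
    [MeasurableSpace β] (s : Finset ι) (ν : ι → Measure α) {f : α → β} (hf : Measurable f) :
    (∑ i ∈ s, ν i).map f = ∑ i ∈ s, (ν i).map f := by
  simp only [← Measure.mapₗ_apply_of_measurable hf, _root_.map_sum]

lemma MeasureTheory.Measure.map_map_eq_of_semiconj {α β : Type*} [MeasurableSpace α]
    [MeasurableSpace β] {G : Measure α} {f : α → β} {g : α → α} {h : β → β} (hf : Measurable f)
    (hg : Measurable g) (hh : Measurable h) (hfgh : Function.Semiconj f g h)
    (hG : G.map g = G) : (G.map f).map h = G.map f := by
  rw [Measure.map_map hh hf, ← hfgh.comp_eq, ← Measure.map_map hf hg, hG]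

lemma eq_integral_of_map_reflect {F : Measure ℝ} [IsProbabilityMeasure F]
    (hF : Integrable (fun y => y) F) {a : ℝ} (ha : F.map (fun y => 2 * a - y) = F) :
    a = ∫ y, y ∂F := by
  have hreflect : ∫ y, y ∂F = ∫ y, (2 * a - y) ∂F := by
    conv_lhs => rw [← ha]
    rw [integral_map (by fun_prop : Measurable fun y : ℝ => 2 * a - y).aemeasurable
      measurable_id'.aestronglyMeasurable]
  rw [integral_sub (integrable_const _) hF, integral_const, probReal_univ, one_smul] at hreflect
  linarith

lemma memLp_two_id_of_integrable_sq {F : Measure ℝ} (hF : Integrable (fun y => y ^ 2) F) :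
    MemLp (fun y : ℝ => y) 2 F :=
  (memLp_two_iff_integrable_sq aestronglyMeasurable_id).2 hF

section SecondMoments

variable {Ω : Type*} [MeasurableSpace Ω] {P : Measure Ω}

lemma integral_sum_mul_sq {ι : Type*} (s : Finset ι) {f : ι → Ω → ℝ}
    (hf : ∀ i, MemLp (f i) 2 P) (w : ι → ℝ) :
    ∫ x, (∑ i ∈ s, w i * f i x) ^ 2 ∂P =
      ∑ i ∈ s, ∑ j ∈ s, w i * w j * ∫ x, f i x * f j x ∂P := by
  have hterm : ∀ i j, Integrable (fun x => w i * f i x * (w j * f j x)) P := fun i j => by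
    simpa only [Pi.mul_apply, mul_mul_mul_comm] using
      ((hf i).integrable_mul (hf j)).const_mul (w i * w j)
  simp_rw [sq, Finset.sum_mul_sum]
  rw [integral_finsetSum _ fun i _ => integrable_finsetSum _ fun j _ => hterm i j]
  refine Finset.sum_congr rfl fun i _ => ?_
  rw [integral_finsetSum _ fun j _ => hterm i j]
  refine Finset.sum_congr rfl fun j _ => ?_
  rw [← integral_const_mul]
  congr 1 with x
  ring

end SecondMoments

section Coordinates

variable {n : Type*} [Fintype n] {G : Measure (n → ℝ)}

lemma memLp_two_apply_of_integrable_sum_sq (h : Integrable (fun x => ∑ i, x i ^ 2) G) (i : n) :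
    MemLp (fun x => x i) 2 G := by
  refine (memLp_two_iff_integrable_sq (measurable_pi_apply i).aestronglyMeasurable).2 ?_
  refine h.mono ((measurable_pi_apply i).pow_const 2).aestronglyMeasurable ?_
  filter_upwards with x
  rw [Real.norm_of_nonneg (sq_nonneg _),
    Real.norm_of_nonneg (Finset.sum_nonneg fun j _ => sq_nonneg (x j))]
  exact Finset.single_le_sum (fun j _ => sq_nonneg (x j)) (Finset.mem_univ i)

variable (hG : ∀ i, MemLp (fun x => x i) 2 G) (w : n → ℝ)
include hG

lemma memLp_two_dotProduct : MemLp (fun x => w ⬝ᵥ x) 2 G :=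
  memLp_finsetSum Finset.univ fun i _ => (hG i).const_mul (w i)

lemma integral_dotProduct [IsFiniteMeasure G] :
    ∫ x, w ⬝ᵥ x ∂G = w ⬝ᵥ fun i => ∫ x, x i ∂G := by
  simp only [dotProduct]
  rw [integral_finsetSum _ fun i _ => ((hG i).integrable one_le_two).const_mul (w i)]
  simp_rw [integral_const_mul]

lemma integral_dotProduct_sub_sq [IsFiniteMeasure G] {μ : n → ℝ} {C : Matrix n n ℝ}
    (hC : ∀ i j, ∫ x, (x i - μ i) * (x j - μ j) ∂G = C i j) :
    ∫ x, (w ⬝ᵥ x - w ⬝ᵥ μ) ^ 2 ∂G = w ⬝ᵥ C *ᵥ w := by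
  have hcentred : ∀ i, MemLp (fun x => x i - μ i) 2 G := fun i => (hG i).sub (memLp_const _)
  simp_rw [← dotProduct_sub]
  simp only [dotProduct, Pi.sub_apply]
  rw [integral_sum_mul_sq _ hcentred]
  simp only [hC, Matrix.mulVec, dotProduct, Finset.mul_sum]
  exact Finset.sum_congr rfl fun i _ => Finset.sum_congr rfl fun j _ => by ring

end Coordinates

open Matrix in
open scoped MatrixOrder in
lemma Matrix.PosDef.exists_eq_transpose_mul_add_vecMulVec {n : Type*} [Fintype n]
    [DecidableEq n] {C : Matrix n n ℝ} (hC : C.PosDef) {w : n → ℝ} (hw : w ≠ 0) :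
    ∃ (U : Matrix n n ℝ) (v : n → ℝ),
      U *ᵥ w = 0 ∧ w ⬝ᵥ v = 1 ∧ Uᵀ * U + (w ⬝ᵥ C *ᵥ w) • vecMulVec v v = C := by
  set c := w ⬝ᵥ C *ᵥ w
  have hc : 0 < c := by simpa using hC.dotProduct_mulVec_pos hw
  obtain ⟨B, hB⟩ := CStarAlgebra.nonneg_iff_eq_star_mul_self.mp hC.posSemidef.nonneg
  rw [star_eq_conjTranspose, conjTranspose_eq_transpose_of_trivial] at hB
  set v := c⁻¹ • C *ᵥ w
  have hwv : w ⬝ᵥ v = 1 := by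
    simp only [v, dotProduct_smul, smul_eq_mul]
    exact inv_mul_cancel₀ hc.ne'
  have hCw : C *ᵥ w = c • v := by simp [v, smul_smul, hc.ne']
  have hwC : w ᵥ* C = c • v := by
    have hCT : Cᵀ = C := by rw [← conjTranspose_eq_transpose_of_trivial]; exact hC.isHermitian
    rw [← mulVec_transpose, hCT, hCw]
  refine ⟨B * (1 - vecMulVec w v), v, ?_, hwv, ?_⟩
  · rw [← mulVec_mulVec, sub_mulVec, one_mulVec, vecMulVec_mulVec, dotProduct_comm, hwv]
    simp
  · rw [transpose_mul, transpose_sub, transpose_one, transpose_vecMulVec, mul_assoc,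
      ← mul_assoc Bᵀ, ← hB]
    simp only [mul_sub, sub_mul, mul_one, one_mul, vecMulVec_mul, mul_vecMulVec, hCw, hwC, hwv,
      vecMulVec_smul, smul_vecMulVec, vecMul_smul, vecMul_vecMulVec, one_smul]
    abel

section Mixture

variable {ι n : Type*}

def lineThrough (v μ : n → ℝ) (m : ℝ) (z : n → ℝ) (y : ℝ) : n → ℝ := z + (y - m) • v + μ

lemma measurable_lineThrough (v μ : n → ℝ) (m : ℝ) (z : n → ℝ) :
    Measurable (lineThrough v μ m z) := by
  unfold lineThrough; fun_prop

variable [Fintype ι]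

lemma inv_two_mul_card_smul_sum_sum_pair [Nonempty ι] {M : Type*} [AddCommMonoid M]
    [Module ℝ≥0∞ M] (x : M) :
    (2 * Fintype.card ι : ℝ≥0∞)⁻¹ • ∑ _k : ι, ∑ _s ∈ ({1, -1} : Finset ℝ), x = x := by
  rw [Finset.sum_pair (by norm_num), Finset.sum_const, Finset.card_univ, ← two_smul ℝ≥0∞,
    ← Nat.cast_smul_eq_nsmul ℝ≥0∞, smul_smul, smul_smul, mul_assoc,
    mul_comm (Fintype.card ι : ℝ≥0∞), ENNReal.inv_mul_cancel (by simp)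
      (ENNReal.mul_ne_top ENNReal.ofNat_ne_top (ENNReal.natCast_ne_top _)), one_smul]

/-- The law of `Z + (Y - m) • v + μ` for `Y ∼ F` and an independent `Z` uniform on the `2 |ι|`
points `± √|ι| • U k`, whose second moment matrix is `Uᵀ * U`. -/
noncomputable def symmetricMixture (F : Measure ℝ) (U : Matrix ι n ℝ) (v μ : n → ℝ) (m : ℝ) :
    Measure (n → ℝ) :=
  (2 * Fintype.card ι : ℝ≥0∞)⁻¹ •
    ∑ k, ∑ s ∈ ({1, -1} : Finset ℝ), F.map (lineThrough v μ m ((s * √(Fintype.card ι)) • U k))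

variable {F : Measure ℝ} {U : Matrix ι n ℝ} {v μ : n → ℝ} {m : ℝ}

lemma isProbabilityMeasure_symmetricMixture [Nonempty ι] [IsProbabilityMeasure F] :
    IsProbabilityMeasure (symmetricMixture F U v μ m) := by
  constructor
  simp only [symmetricMixture, Measure.smul_apply, Measure.finsetSum_apply,
    Measure.map_apply (measurable_lineThrough _ _ _ _) MeasurableSet.univ, Set.preimage_univ,
    measure_univ]
  exact inv_two_mul_card_smul_sum_sum_pair 1

lemma integrable_symmetricMixture [Nonempty ι] {f : (n → ℝ) → ℝ} (hf : Measurable f)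
    (hfi : ∀ z, Integrable (fun y => f (lineThrough v μ m z y)) F) :
    Integrable f (symmetricMixture F U v μ m) := by
  refine Integrable.smul_measure ?_ (ENNReal.inv_ne_top.2 (by simp))
  refine integrable_finsetSum_measure.2 fun k _ => integrable_finsetSum_measure.2 fun s _ => ?_
  exact (integrable_map_measure hf.aestronglyMeasurable
    (measurable_lineThrough _ _ _ _).aemeasurable).2 (hfi _)

lemma integral_symmetricMixture {f : (n → ℝ) → ℝ} (hf : Measurable f)
    (hfi : ∀ z, Integrable (fun y => f (lineThrough v μ m z y)) F) :
    ∫ x, f x ∂(symmetricMixture F U v μ m) = (2 * Fintype.card ι : ℝ)⁻¹ *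
      ∑ k, ∑ s ∈ ({1, -1} : Finset ℝ),
        ∫ y, f (lineThrough v μ m ((s * √(Fintype.card ι)) • U k) y) ∂F := by
  have hmap : ∀ z, Integrable f (F.map (lineThrough v μ m z)) := fun z =>
    (integrable_map_measure hf.aestronglyMeasurable
      (measurable_lineThrough _ _ _ _).aemeasurable).2 (hfi z)
  rw [symmetricMixture, integral_smul_measure,
    integral_finsetSum_measure fun k _ => integrable_finsetSum_measure.2 fun s _ => hmap _]
  simp_rw [integral_finsetSum_measure fun s _ => hmap _,
    integral_map (measurable_lineThrough _ _ _ _).aemeasurable hf.aestronglyMeasurable]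
  simp [smul_eq_mul]

lemma map_reflect_symmetricMixture (hF : F.map (fun y => 2 * m - y) = F) :
    (symmetricMixture F U v μ m).map (fun x => (2 : ℝ) • μ - x) =
      symmetricMixture F U v μ m := by
  have hreflect : Measurable fun x : n → ℝ => (2 : ℝ) • μ - x := by fun_prop
  have hline : ∀ z, (F.map (lineThrough v μ m z)).map (fun x => (2 : ℝ) • μ - x) =
      F.map (lineThrough v μ m (-z)) := fun z => by
    conv_rhs => rw [← hF]
    rw [Measure.map_map (measurable_lineThrough _ _ _ _) (by fun_prop),
      Measure.map_map hreflect (measurable_lineThrough _ _ _ _)]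
    congr 1
    funext y
    simp only [Function.comp_apply, lineThrough]
    module
  rw [symmetricMixture, Measure.map_smul, Measure.map_finsetSum _ _ hreflect]
  simp_rw [Measure.map_finsetSum _ _ hreflect, hline,
    Finset.sum_pair (by norm_num : (1 : ℝ) ≠ -1)]
  simp only [neg_smul, one_mul, neg_one_mul, neg_neg, add_comm]

lemma map_dotProduct_symmetricMixture [Fintype n] [Nonempty ι] {w : n → ℝ} (hUw : U *ᵥ w = 0)
    (hwv : w ⬝ᵥ v = 1) :
    (symmetricMixture F U v μ (w ⬝ᵥ μ)).map (fun x => w ⬝ᵥ x) = F := by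
  have hdot : Measurable fun x : n → ℝ => w ⬝ᵥ x := by fun_prop
  have hline : ∀ (k : ι) (s : ℝ),
      (F.map (lineThrough v μ (w ⬝ᵥ μ) (s • U k))).map (fun x => w ⬝ᵥ x) = F := by
    intro k s
    have hUkw : w ⬝ᵥ U k = 0 := by rw [dotProduct_comm]; exact congr_fun hUw k
    rw [Measure.map_map hdot (measurable_lineThrough _ _ _ _)]
    convert Measure.map_id
    funext y
    simp [lineThrough, dotProduct_add, dotProduct_smul, hUkw, hwv]
  rw [symmetricMixture, Measure.map_smul, Measure.map_finsetSum _ _ hdot]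
  simp_rw [Measure.map_finsetSum _ _ hdot, hline]
  exact inv_two_mul_card_smul_sum_sum_pair F

section Moments

variable [IsProbabilityMeasure F] (hF2 : Integrable (fun y => y ^ 2) F)
include hF2

lemma memLp_lineThrough_apply (z : n → ℝ) (i : n) :
    MemLp (fun y => lineThrough v μ m z y i) 2 F := by
  have hline : (fun y => lineThrough v μ m z y i) = fun y => (z i + μ i - m * v i) + y * v i := by
    funext y
    simp only [lineThrough, Pi.add_apply, Pi.smul_apply, smul_eq_mul]
    ring
  rw [hline]
  exact (memLp_const (z i + μ i - m * v i)).add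
    ((memLp_two_id_of_integrable_sq hF2).mul_const (v i))

lemma integral_sub_mean (hm : ∫ y, y ∂F = m) : ∫ y, (y - m) ∂F = 0 := by
  rw [integral_sub ((memLp_two_id_of_integrable_sq hF2).integrable one_le_two)
    (integrable_const m), hm, integral_const]
  simp

lemma integral_lineThrough_apply (hm : ∫ y, y ∂F = m) (z : n → ℝ) (i : n) :
    ∫ y, lineThrough v μ m z y i ∂F = z i + μ i := by
  have hcentred : MemLp (fun y => y - m) 2 F :=
    (memLp_two_id_of_integrable_sq hF2).sub (memLp_const m)
  have hline : (fun y => lineThrough v μ m z y i) = fun y => (z i + μ i) + (y - m) * v i := by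
    funext y
    simp only [lineThrough, Pi.add_apply, Pi.smul_apply, smul_eq_mul]
    ring
  rw [hline, integral_add (integrable_const _) ((hcentred.integrable one_le_two).mul_const _),
    integral_const, integral_mul_const, integral_sub_mean hF2 hm]
  simp

lemma integral_lineThrough_sub_mul (hm : ∫ y, y ∂F = m) (z : n → ℝ) (i j : n) :
    ∫ y, (lineThrough v μ m z y i - μ i) * (lineThrough v μ m z y j - μ j) ∂F =
      z i * z j + v i * v j * ∫ y, (y - m) ^ 2 ∂F := by
  have hcentred : MemLp (fun y => y - m) 2 F :=
    (memLp_two_id_of_integrable_sq hF2).sub (memLp_const m)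
  have hline : (fun y => (lineThrough v μ m z y i - μ i) * (lineThrough v μ m z y j - μ j)) =
      fun y => z i * z j + ((y - m) * (z i * v j + z j * v i) + (y - m) ^ 2 * (v i * v j)) := by
    funext y
    simp only [lineThrough, Pi.add_apply, Pi.smul_apply, smul_eq_mul]
    ring
  have hlinear : Integrable (fun y => (y - m) * (z i * v j + z j * v i)) F :=
    (hcentred.integrable one_le_two).mul_const _
  have hquadratic : Integrable (fun y => (y - m) ^ 2 * (v i * v j)) F :=
    hcentred.integrable_sq.mul_const _
  have hsum : Integrable (fun y => (y - m) * (z i * v j + z j * v i) +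
      (y - m) ^ 2 * (v i * v j)) F := hlinear.add hquadratic
  rw [hline, integral_add (integrable_const _) hsum,
    integral_add hlinear hquadratic, integral_const, integral_mul_const, integral_mul_const,
    integral_sub_mean hF2 hm]
  simp only [probReal_univ, one_smul, zero_mul, zero_add]
  ring

lemma memLp_apply_symmetricMixture [Nonempty ι] (i : n) :
    MemLp (fun x => x i) 2 (symmetricMixture F U v μ m) :=
  (memLp_two_iff_integrable_sq (measurable_pi_apply i).aestronglyMeasurable).2 <|
    integrable_symmetricMixture (by fun_prop) fun z =>
      (memLp_lineThrough_apply hF2 z i).integrable_sq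

variable (hm : ∫ y, y ∂F = m)
include hm

lemma integral_apply_symmetricMixture [Nonempty ι] (i : n) :
    ∫ x, x i ∂(symmetricMixture F U v μ m) = μ i := by
  rw [integral_symmetricMixture (measurable_pi_apply i) fun z =>
    (memLp_lineThrough_apply hF2 z i).integrable one_le_two]
  simp_rw [integral_lineThrough_apply hF2 hm, Finset.sum_pair (by norm_num : (1 : ℝ) ≠ -1)]
  have hpair : ∀ k, ((1 * √(Fintype.card ι)) • U k) i + μ i +
      ((((-1) * √(Fintype.card ι)) • U k) i + μ i) = 2 * μ i := fun k => by
    simp only [Pi.smul_apply, smul_eq_mul]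
    ring
  rw [Finset.sum_congr rfl fun k _ => hpair k, Finset.sum_const, Finset.card_univ, nsmul_eq_mul]
  field_simp

lemma integral_sub_mul_sub_symmetricMixture [Nonempty ι] (i j : n) :
    ∫ x, (x i - μ i) * (x j - μ j) ∂(symmetricMixture F U v μ m) =
      (Uᵀ * U + (∫ y, (y - m) ^ 2 ∂F) • Matrix.vecMulVec v v) i j := by
  rw [integral_symmetricMixture (by fun_prop) fun z =>
    ((memLp_lineThrough_apply hF2 z i).sub (memLp_const _)).integrable_mul
      ((memLp_lineThrough_apply hF2 z j).sub (memLp_const _))]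
  simp_rw [integral_lineThrough_sub_mul hF2 hm, Finset.sum_pair (by norm_num : (1 : ℝ) ≠ -1)]
  simp only [Pi.smul_apply, smul_eq_mul, Matrix.add_apply, Matrix.smul_apply, Matrix.mul_apply,
    Matrix.transpose_apply, Matrix.vecMulVec_apply]
  have hcard : (Fintype.card ι : ℝ) ≠ 0 := Nat.cast_ne_zero.2 Fintype.card_ne_zero
  have hsqrt : √(Fintype.card ι : ℝ) ^ 2 = Fintype.card ι := Real.sq_sqrt (Nat.cast_nonneg _)
  set σ2 := ∫ y, (y - m) ^ 2 ∂F
  have hpair : ∀ k, 1 * √(Fintype.card ι) * U k i * (1 * √(Fintype.card ι) * U k j) +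
      v i * v j * σ2 + (-1 * √(Fintype.card ι) * U k i * (-1 * √(Fintype.card ι) * U k j) +
      v i * v j * σ2) = 2 * Fintype.card ι * (U k i * U k j) + 2 * (σ2 * (v i * v j)) :=
    fun k => by linear_combination (2 * U k i * U k j) * hsqrt
  rw [Finset.sum_congr rfl fun k _ => hpair k, Finset.sum_add_distrib, ← Finset.mul_sum,
    Finset.sum_const, Finset.card_univ, nsmul_eq_mul]
  field_simp

end Moments

end Mixture

theorem stmt_14 (d : ℕ) (μ : Fin d → ℝ) (C : Matrix (Fin d) (Fin d) ℝ) (hC : C.PosDef)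
    (w : Fin d → ℝ) (hw : w ≠ 0) :
    {F : Measure ℝ | ∃ G : Measure (Fin d → ℝ), IsProbabilityMeasure G ∧
        Integrable (fun x => ∑ i, (x i) ^ 2) G ∧
        (∃ a : Fin d → ℝ, Measure.map (fun x => (2 : ℝ) • a - x) G = G) ∧
        (∀ i, (∫ x, x i ∂G) = μ i) ∧
        (∀ i j, (∫ x, (x i - μ i) * (x j - μ j) ∂G) = C i j) ∧
        F = Measure.map (fun x => ∑ i, w i * x i) G}
    = {F : Measure ℝ | IsProbabilityMeasure F ∧ Integrable (fun x => x ^ 2) F ∧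
        (∃ a : ℝ, Measure.map (fun x => 2 * a - x) F = F) ∧
        (∫ x, x ∂F) = ∑ i, w i * μ i ∧
        (∫ x, (x - ∑ i, w i * μ i) ^ 2 ∂F) = dotProduct w (C.mulVec w)} := by
  have hsum_eq_dot : (fun x : Fin d → ℝ => ∑ i, w i * x i) = (w ⬝ᵥ ·) := rfl
  have hwμ : ∑ i, w i * μ i = w ⬝ᵥ μ := rfl
  ext F
  rw [hsum_eq_dot, hwμ]
  constructor
  · rintro ⟨G, hG, hsq, ⟨a, ha⟩, hmean, hcov, rfl⟩
    have hcoord := memLp_two_apply_of_integrable_sum_sq hsq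
    have hdot : Measurable fun x : Fin d → ℝ => w ⬝ᵥ x := by fun_prop
    refine ⟨Measure.isProbabilityMeasure_map hdot.aemeasurable, ?_, ⟨w ⬝ᵥ a, ?_⟩, ?_, ?_⟩
    · exact (integrable_map_measure (by fun_prop) hdot.aemeasurable).2
        (memLp_two_dotProduct hcoord w).integrable_sq
    · refine Measure.map_map_eq_of_semiconj hdot (by fun_prop) (by fun_prop) (fun x => ?_) ha
      simp [dotProduct_sub, dotProduct_smul]
    · rw [integral_map hdot.aemeasurable measurable_id'.aestronglyMeasurable,
        integral_dotProduct hcoord w]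
      simp only [hmean]
    · rw [integral_map hdot.aemeasurable (by fun_prop)]
      exact integral_dotProduct_sub_sq hcoord w hcov
  · rintro ⟨hF, hsq, ⟨a, ha⟩, hmean, hvar⟩
    have : Nonempty (Fin d) := let ⟨i, _⟩ := Function.ne_iff.1 hw; ⟨i⟩
    obtain ⟨U, v, hUw, hwv, hCsplit⟩ := hC.exists_eq_transpose_mul_add_vecMulVec hw
    have hreflect : F.map (fun y => 2 * (w ⬝ᵥ μ) - y) = F := by
      have hF1 := (memLp_two_id_of_integrable_sq hsq).integrable one_le_two
      rwa [eq_integral_of_map_reflect hF1 ha, hmean] at ha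
    refine ⟨symmetricMixture F U v μ (w ⬝ᵥ μ), isProbabilityMeasure_symmetricMixture,
      integrable_finsetSum _ fun i _ => (memLp_apply_symmetricMixture hsq i).integrable_sq,
      ⟨μ, map_reflect_symmetricMixture hreflect⟩,
      integral_apply_symmetricMixture hsq hmean, fun i j => ?_,
      (map_dotProduct_symmetricMixture hUw hwv).symm⟩
    rw [integral_sub_mul_sub_symmetricMixture hsq hmean]
    exact congr_fun (congr_fun (hvar ▸ hCsplit) i) j
end
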